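/- arXiv:1304.2678 — 10 statements merged into one kernel-verified Lean document; each statement's English description precedes it below -/
import Mathlib

section
/- Let n be an odd positive integer and k a positive integer. Then n divides S_k(n) if and only if gcd(k, p-1) < p-1 for every prime p dividing n (equivalently, p-1 does not divide k for every prime divisor p of n). -/
open Finset

def S (k n : ℕ) : ℕ := ∑ j ∈ Finset.Icc 1 n, j ^ k

def Wps (k m : ℕ) : ℕ := ∑ j ∈ Finset.range m, j ^ k

lemma nilp_add_pow {R : Type*} [CommRing R] (a b : R) (hb : b * b = 0) :
    ∀ k : ℕ, (a + b) ^ (k + 1) = a ^ (k + 1) + ((k : R) + 1) * a ^ k * b := by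
  intro k
  induction k with
  | zero => push_cast; ring
  | succ k ih =>
    have : (a + b) ^ (k + 1 + 1) = ((a + b) ^ (k + 1)) * (a + b) := by ring
    rw [this, ih]
    push_cast
    linear_combination ((k : R) + 1) * a ^ k * hb

lemma sum_range_mul' {M : Type*} [AddCommMonoid M] (f : ℕ → M) (m : ℕ) :
    ∀ t, ∑ j ∈ range (m * t), f j = ∑ s ∈ range t, ∑ x ∈ range m, f (m * s + x) := by
  intro t
  induction t with
  | zero => simp
  | succ t ih =>
    rw [Nat.mul_succ, Finset.sum_range_add, ih, Finset.sum_range_succ]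

lemma W_step {p : ℕ} (hp : p.Prime) (hodd : p ≠ 2) {k : ℕ} (hk : 0 < k)
    {e : ℕ} (he : 1 ≤ e) : Wps k (p ^ (e + 1)) ≡ p * Wps k (p ^ e) [MOD p ^ (e + 1)] := by
  rw [← ZMod.natCast_eq_natCast_iff]
  set N := p ^ (e + 1) with hN
  obtain ⟨k', rfl⟩ : ∃ k', k = k' + 1 := ⟨k - 1, (Nat.succ_pred_eq_of_pos hk).symm⟩
  set K : ZMod N := (k' : ZMod N) + 1 with hK
  set P : ZMod N := (p : ZMod N) ^ e with hP
  set T : ZMod N := ∑ x ∈ range (p ^ e), (x : ZMod N) ^ k' with hT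
  have hb : P * P = 0 := by
    rw [hP, ← Nat.cast_pow, ← Nat.cast_mul, ZMod.natCast_eq_zero_iff, ← pow_add]
    exact pow_dvd_pow p (by omega)
  have hW : Wps (k' + 1) (p ^ (e + 1)) =
      ∑ s ∈ range p, ∑ x ∈ range (p ^ e), (p ^ e * s + x) ^ (k' + 1) := by
    rw [Wps, pow_succ, sum_range_mul']
  rw [hW]
  push_cast
  have hzero : P * ∑ s ∈ range p, (s : ZMod N) = 0 := by
    have h2 : 2 ∣ p - 1 := by
      rcases hp.eq_two_or_odd with h | h
      · exact absurd h hodd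
      · have := hp.two_le; omega
    obtain ⟨c, hc⟩ := h2
    have hdiv : p * (p - 1) / 2 = p * c := by
      rw [hc, show p * (2 * c) = p * c * 2 by ring]
      exact Nat.mul_div_cancel _ (by norm_num)
    have hsum : ∑ s ∈ range p, (s : ZMod N) = ((p * (p - 1) / 2 : ℕ) : ZMod N) := by
      rw [← Nat.cast_sum]
      congr 1
      rw [Finset.sum_range_id, Nat.mul_comm]
    rw [hsum, hP, ← Nat.cast_pow, ← Nat.cast_mul, ZMod.natCast_eq_zero_iff, hdiv, hN]
    exact ⟨c, by ring⟩
  calc (∑ s ∈ range p, ∑ x ∈ range (p ^ e),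
        ((p : ZMod N) ^ e * (s : ZMod N) + (x : ZMod N)) ^ (k' + 1))
      = ∑ s ∈ range p, ∑ x ∈ range (p ^ e),
        ((x : ZMod N) ^ (k' + 1) + K * (x : ZMod N) ^ k' * (P * s)) := by
        refine Finset.sum_congr rfl fun s _ => Finset.sum_congr rfl fun x _ => ?_
        rw [add_comm ((p : ZMod N) ^ e * (s : ZMod N)), ← hP]
        exact nilp_add_pow (x : ZMod N) (P * (s : ZMod N)) (by
          have : P * (s : ZMod N) * (P * (s : ZMod N)) = P * P * ((s:ZMod N) * s) := by ring
          rw [this, hb, zero_mul]) k'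
    _ = ∑ s ∈ range p, ((∑ x ∈ range (p ^ e), (x : ZMod N) ^ (k' + 1)) + (K * P * T) * s) := by
        refine Finset.sum_congr rfl fun s _ => ?_
        rw [Finset.sum_add_distrib]
        congr 1
        rw [hT, Finset.mul_sum, Finset.sum_mul]
        exact Finset.sum_congr rfl fun x _ => by ring
    _ = (p : ZMod N) * (∑ x ∈ range (p ^ e), (x : ZMod N) ^ (k' + 1))
        + (K * T) * (P * ∑ s ∈ range p, (s : ZMod N)) := by
        rw [Finset.sum_add_distrib, Finset.sum_const, card_range, nsmul_eq_mul, ← Finset.mul_sum]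
        ring
    _ = (p : ZMod N) * ((Wps (k' + 1) (p ^ e) : ℕ) : ZMod N) := by
        rw [hzero, mul_zero, add_zero, Wps]
        push_cast
        ring

lemma W_base {p : ℕ} (hp : p.Prime) {k : ℕ} (hk : 0 < k) :
    ((Wps k p : ℕ) : ZMod p) = if (p - 1) ∣ k then (-1 : ZMod p) else 0 := by
  haveI : Fact p.Prime := ⟨hp⟩
  haveI : NeZero p := ⟨hp.pos.ne'⟩
  have h1 : ((Wps k p : ℕ) : ZMod p) = ∑ x : ZMod p, x ^ k := by
    rw [Wps]
    push_cast
    refine Finset.sum_nbij' (fun j => (j : ZMod p)) (fun x => x.val) ?_ ?_ ?_ ?_ ?_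
    · intro a _; exact Finset.mem_univ _
    · intro x _; exact Finset.mem_range.mpr (ZMod.val_lt x)
    · intro a ha; exact ZMod.val_cast_of_lt (Finset.mem_range.mp ha)
    · intro x _; exact ZMod.natCast_rightInverse x
    · intro a _; rfl
  classical
  have h2 : ∑ x : ZMod p, x ^ k = ∑ x : (ZMod p)ˣ, ((x : ZMod p)) ^ k := by
    let φ : (ZMod p)ˣ ↪ ZMod p := ⟨fun x => x, Units.val_injective⟩
    have hmap : Finset.univ.map φ = Finset.univ \ {0} := by
      ext x
      simpa only [Finset.mem_map, Finset.mem_univ, Function.Embedding.coeFn_mk, true_and,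
        Finset.mem_sdiff, Finset.mem_singleton, φ] using (show (∃ a : (ZMod p)ˣ, (a : ZMod p) = x) ↔ ¬x = 0 from isUnit_iff_ne_zero)
    calc ∑ x : ZMod p, x ^ k = ∑ x ∈ Finset.univ \ {(0 : ZMod p)}, x ^ k := by
          rw [← Finset.sum_sdiff (Finset.subset_univ {(0 : ZMod p)}), Finset.sum_singleton,
            zero_pow hk.ne', add_zero]
      _ = ∑ x : (ZMod p)ˣ, ((x : ZMod p)) ^ k := by
          rw [← hmap, Finset.sum_map]
          rfl
  have h3 := FiniteField.sum_pow_units (ZMod p) k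
  rw [ZMod.card] at h3
  rw [h1, h2]
  simp only [← h3]

lemma W_pow_a {p : ℕ} (hp : p.Prime) (hodd : p ≠ 2) {k : ℕ} (hk : 0 < k) (hd : (p - 1) ∣ k) :
    ∀ e : ℕ, Wps k (p ^ (e + 1)) ≡ (p - 1) * p ^ e [MOD p ^ (e + 1)] := by
  intro e
  induction e with
  | zero =>
    rw [← ZMod.natCast_eq_natCast_iff, pow_one, W_base hp hk, if_pos hd]
    push_cast [Nat.cast_sub hp.one_le]
    simp [ZMod.natCast_self]
  | succ e ih =>
    refine (W_step hp hodd hk (by omega)).trans ?_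
    have := Nat.ModEq.mul_left' (c := p) ih
    rw [show p * ((p - 1) * p ^ e) = (p - 1) * p ^ (e + 1) by ring,
      show p * p ^ (e + 1) = p ^ (e + 2) by ring] at this
    exact this

lemma W_pow_b {p : ℕ} (hp : p.Prime) (hodd : p ≠ 2) {k : ℕ} (hk : 0 < k) (hd : ¬ (p - 1) ∣ k) :
    ∀ e : ℕ, p ^ e ∣ Wps k (p ^ e) := by
  intro e
  induction e with
  | zero => simp
  | succ e ih =>
    rcases Nat.eq_zero_or_pos e with rfl | he
    · rw [← ZMod.natCast_eq_zero_iff, pow_one, W_base hp hk, if_neg hd]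
    · have hstep := W_step hp hodd hk he
      have : p ^ (e + 1) ∣ p * Wps k (p ^ e) := by
        obtain ⟨c, hc⟩ := ih
        exact ⟨c, by rw [hc]; ring⟩
      exact (Nat.modEq_zero_iff_dvd.mp
        (hstep.trans (Nat.modEq_zero_iff_dvd.mpr this)))

lemma W_periodic (k m : ℕ) : ∀ t : ℕ,
    ((Wps k (m * t) : ℕ) : ZMod m) = (t : ZMod m) * ((Wps k m : ℕ) : ZMod m) := by
  intro t
  induction t with
  | zero => simp [Wps]
  | succ t ih =>
    have : Wps k (m * (t + 1)) = Wps k (m * t) + ∑ x ∈ range m, (m * t + x) ^ k := by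
      rw [Wps, Nat.mul_succ, Finset.sum_range_add]; rfl
    rw [this]
    push_cast
    rw [ih]
    have : ∑ x ∈ range m, (((m : ZMod m) * t + x) ^ k) = ((Wps k m : ℕ) : ZMod m) := by
      rw [Wps]
      push_cast
      refine Finset.sum_congr rfl fun x _ => ?_
      rw [ZMod.natCast_self, zero_mul, zero_add]
    rw [this]
    ring

lemma S_eq_W (k n : ℕ) (hk : 0 < k) : S k n = Wps k n + n ^ k := by
  have h : Wps k (n + 1) = Wps k n + n ^ k := Finset.sum_range_succ _ n
  rw [← h, Wps, S, Finset.range_eq_Ico,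
    Finset.sum_eq_sum_Ico_succ_bot (Nat.succ_pos n), zero_pow hk.ne', zero_add,
    Nat.succ_eq_add_one, zero_add, Finset.Ico_add_one_right_eq_Icc]

lemma odd_prime_of_dvd {n p : ℕ} (hodd : Odd n) (hp : p.Prime) (hpn : p ∣ n) : p ≠ 2 := by
  rintro rfl
  obtain ⟨c, rfl⟩ := hpn
  simp [Nat.odd_iff, Nat.mul_mod_right] at hodd

lemma dvd_W_of_dvd {n p i k : ℕ} (hk : 0 < k) (hpin : p ^ i ∣ n)
    (hW : p ^ i ∣ Wps k (p ^ i)) : p ^ i ∣ Wps k n := by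
  obtain ⟨t, rfl⟩ := hpin
  rw [← ZMod.natCast_eq_zero_iff]
  rw [W_periodic k (p ^ i) t]
  rw [(ZMod.natCast_eq_zero_iff _ _).mpr hW, mul_zero]

theorem odd_dvd_powerSum_iff (n k : ℕ) (hn : 0 < n) (hodd : Odd n) (hk : 0 < k) :
    n ∣ S k n ↔ ∀ p : ℕ, p.Prime → p ∣ n → ¬ (p - 1) ∣ k := by
  constructor
  · intro hdvd p hp hpn hpk
    have hp2 : p ≠ 2 := odd_prime_of_dvd hodd hp hpn
    set e := n.factorization p with he
    have he1 : 1 ≤ e := hp.factorization_pos_of_dvd hn.ne' hpn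
    have hpe : p ^ e ∣ n := Nat.ordProj_dvd n p
    have hS : p ^ e ∣ S k n := hpe.trans hdvd
    have hnk : p ^ e ∣ n ^ k := hpe.trans (dvd_pow_self n hk.ne')
    have hWn : p ^ e ∣ Wps k n := by
      have hsw := S_eq_W k n hk
      have : Wps k n = S k n - n ^ k := by omega
      rw [this]
      exact Nat.dvd_sub hS hnk
    -- transfer to Wps k (p ^ e)
    have hndvd : ¬ p ∣ n / p ^ e := Nat.not_dvd_ordCompl hp hn.ne'
    obtain ⟨t, ht⟩ := hpe
    have htq : t = n / p ^ e := by
      rw [ht]; rw [Nat.mul_div_cancel_left _ (pow_pos hp.pos e)]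
    have hcop : Nat.Coprime (p ^ e) t := by
      rw [htq]
      exact (Nat.Prime.coprime_iff_not_dvd hp).mpr hndvd |>.pow_left e
    have hWt : p ^ e ∣ t * Wps k (p ^ e) := by
      have := W_periodic k (p ^ e) t
      rw [← ht] at this
      rw [← ZMod.natCast_eq_zero_iff]
      push_cast
      rw [← this, ZMod.natCast_eq_zero_iff]
      exact hWn
    have hWpe : p ^ e ∣ Wps k (p ^ e) := (Nat.Coprime.dvd_of_dvd_mul_left hcop hWt)
    -- contradiction with W_pow_a
    have hee : e = (e - 1) + 1 := by omega
    set e' := e - 1 with he'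
    rw [hee] at hWpe
    have hA := W_pow_a hp hp2 hk hpk e'
    have hdd : p ^ (e' + 1) ∣ (p - 1) * p ^ e' :=
      Nat.modEq_zero_iff_dvd.mp
        ((hA.symm).trans (Nat.modEq_zero_iff_dvd.mpr hWpe))
    have hpd : p ∣ p - 1 := by
      have hpos : 0 < p ^ e' := pow_pos hp.pos e'
      rw [pow_succ] at hdd
      rw [mul_comm (p - 1) (p ^ e')] at hdd
      exact (mul_dvd_mul_iff_left hpos.ne').mp hdd
    have := Nat.le_of_dvd (by have := hp.two_le; omega) hpd
    have := hp.two_le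
    omega
  · intro h
    rw [Nat.dvd_iff_prime_pow_dvd_dvd]
    intro p i hp hpin
    rcases Nat.eq_zero_or_pos i with rfl | hi
    · simp
    have hpp : p.Prime := hp
    have hpn : p ∣ n := (dvd_pow_self p hi.ne').trans hpin
    have hp2 : p ≠ 2 := odd_prime_of_dvd hodd hpp hpn
    have hWn : p ^ i ∣ Wps k n :=
      dvd_W_of_dvd hk hpin (W_pow_b hpp hp2 hk (h p hpp hpn) i)
    have hnk : p ^ i ∣ n ^ k := hpin.trans (dvd_pow_self n hk.ne')
    rw [S_eq_W k n hk]
    exact Nat.dvd_add hWn hnk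
end

section
/- Let n be a positive integer with n \equiv 2 (mod 4) and k a positive integer. Then n does not divide S_k(n). -/
theorem not_dvd_powerSum_of_two_mod_four (n k : ℕ) (hn : n % 4 = 2) (hk : 0 < k) :
    ¬ n ∣ S k n := by
  intro hdvd
  have h2 : (2 : ℕ) ∣ n := Nat.dvd_of_mod_eq_zero (by omega)
  have hmod : S k n % 2 = (∑ j ∈ Finset.Icc 1 n, j) % 2 := by
    unfold S
    rw [Finset.sum_nat_mod]
    conv_rhs => rw [Finset.sum_nat_mod]
    congr 1
    apply Finset.sum_congr rfl
    intro j _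
    rw [Nat.pow_mod]
    rcases Nat.mod_two_eq_zero_or_one j with h | h <;>
      simp [h, Nat.zero_pow hk]
  obtain ⟨m, hm⟩ : ∃ m, n = 4 * m + 2 := ⟨n / 4, by omega⟩
  have hset : Finset.range (n + 1) = insert 0 (Finset.Icc 1 n) := by
    ext x; simp; omega
  have key : (∑ j ∈ Finset.Icc 1 n, j) * 2 = n * (n + 1) := by
    have := Finset.sum_range_id_mul_two (n + 1)
    rw [hset, Finset.sum_insert (by simp)] at this
    simpa [Nat.mul_comm] using this
  have key2 : (∑ j ∈ Finset.Icc 1 n, j) * 2 = 2 * ((2 * m + 1) * (4 * m + 3)) := by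
    rw [key, hm]; ring
  set t := (2 * m + 1) * (4 * m + 3) with ht
  have hst : (∑ j ∈ Finset.Icc 1 n, j) = t := by omega
  have htodd : t % 2 = 1 := by
    rw [ht, Nat.mul_mod]
    have h1 : (2 * m + 1) % 2 = 1 := by omega
    have h2 : (4 * m + 3) % 2 = 1 := by omega
    rw [h1, h2]
  have hSodd : S k n % 2 = 1 := by rw [hmod, hst, htodd]
  have : (2 : ℕ) ∣ S k n := h2.trans hdvd
  omega
end

section
/- Let n be a positive multiple of 4 and k a positive even integer. Then n does not divide S_k(n). -/
lemma sum_modEq {q : ℕ} {s : Finset ℕ} {f g : ℕ → ℕ}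
    (h : ∀ i ∈ s, f i ≡ g i [MOD q]) :
    (∑ i ∈ s, f i) ≡ (∑ i ∈ s, g i) [MOD q] := by
  rw [← ZMod.natCast_eq_natCast_iff]
  push_cast
  exact Finset.sum_congr rfl fun i hi => by
    have := h i hi
    rw [← ZMod.natCast_eq_natCast_iff] at this
    push_cast at this
    exact this

lemma shift_pow_modEq (a j l : ℕ) :
    (2 ^ (a + 1) + j) ^ (2 * l) ≡ j ^ (2 * l) [MOD 2 ^ (a + 2)] := by
  rw [← ZMod.natCast_eq_natCast_iff]
  push_cast
  have hx2 : ((2 : ZMod (2 ^ (a + 2))) ^ (a + 1)) ^ 2 = 0 := by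
    have : ((2 ^ (2 * (a + 1)) : ℕ) : ZMod (2 ^ (a + 2))) = 0 := by
      rw [ZMod.natCast_eq_zero_iff]
      exact pow_dvd_pow 2 (by omega)
    push_cast at this
    rw [← pow_mul, mul_comm]
    exact this
  have h2x : 2 * ((2 : ZMod (2 ^ (a + 2))) ^ (a + 1)) = 0 := by
    have h := ZMod.natCast_self (2 ^ (a + 2))
    push_cast at h
    rw [show (2 : ZMod (2 ^ (a + 2))) * 2 ^ (a + 1) = 2 ^ (a + 2) by ring, h]
  have hsq : ((2 : ZMod (2 ^ (a + 2))) ^ (a + 1) + (j : ZMod (2 ^ (a + 2)))) ^ 2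
      = (j : ZMod (2 ^ (a + 2))) ^ 2 := by
    rw [add_sq, hx2, h2x]
    ring
  rw [pow_mul, pow_mul, hsq]

lemma key_sum (l : ℕ) (hl : 0 < l) :
    ∀ a, (∑ j ∈ Finset.range (2 ^ (a + 1)), j ^ (2 * l)) ≡ 2 ^ a [MOD 2 ^ (a + 1)] := by
  intro a
  induction a with
  | zero =>
    simp [Finset.sum_range_succ, zero_pow (by omega : 2 * l ≠ 0)]
    rfl
  | succ a ih =>
    have hsplit : (∑ j ∈ Finset.range (2 ^ (a + 2)), j ^ (2 * l))
        = (∑ j ∈ Finset.range (2 ^ (a + 1)), j ^ (2 * l))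
          + ∑ j ∈ Finset.range (2 ^ (a + 1)), (2 ^ (a + 1) + j) ^ (2 * l) := by
      rw [← Finset.sum_range_add]
      congr 1
      ring
    rw [hsplit]
    have h1 : (∑ j ∈ Finset.range (2 ^ (a + 1)), j ^ (2 * l))
          + (∑ j ∈ Finset.range (2 ^ (a + 1)), (2 ^ (a + 1) + j) ^ (2 * l))
        ≡ (∑ j ∈ Finset.range (2 ^ (a + 1)), j ^ (2 * l))
          + (∑ j ∈ Finset.range (2 ^ (a + 1)), j ^ (2 * l)) [MOD 2 ^ (a + 2)] :=
      Nat.ModEq.add_left _ (sum_modEq fun j _ => shift_pow_modEq a j l)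
    refine h1.trans ?_
    have h2 : 2 * (∑ j ∈ Finset.range (2 ^ (a + 1)), j ^ (2 * l))
        ≡ 2 * 2 ^ a [MOD 2 * 2 ^ (a + 1)] := ih.mul_left' 2
    have e1 : 2 * 2 ^ (a + 1) = 2 ^ (a + 2) := by ring
    have e2 : 2 * 2 ^ a = 2 ^ (a + 1) := by ring
    rw [e1, e2, two_mul] at h2
    exact h2

lemma blocks (q k : ℕ) :
    ∀ m, (∑ j ∈ Finset.range (q * m), j ^ k) ≡ m * (∑ j ∈ Finset.range q, j ^ k) [MOD q] := by
  intro m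
  induction m with
  | zero => simp
            rfl
  | succ m ih =>
    have hsplit : (∑ j ∈ Finset.range (q * (m + 1)), j ^ k)
        = (∑ j ∈ Finset.range (q * m), j ^ k)
          + ∑ j ∈ Finset.range q, (q * m + j) ^ k := by
      rw [show q * (m + 1) = q * m + q by ring, Finset.sum_range_add]
    rw [hsplit, add_one_mul]
    refine Nat.ModEq.add ih (sum_modEq fun j _ => ?_)
    have h0 : q * m + j ≡ 0 + j [MOD q] :=
      Nat.ModEq.add_right j ((Nat.modEq_zero_iff_dvd).mpr ⟨m, rfl⟩)
    simpa using h0.pow k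

theorem not_dvd_powerSum_of_four_dvd_even_exp (n k : ℕ) (hn : 0 < n) (h4 : 4 ∣ n)
    (hk : 0 < k) (hev : Even k) : ¬ n ∣ S k n := by
  intro hdvd
  obtain ⟨a, m, hm, rfl⟩ := Nat.exists_eq_pow_mul_and_not_dvd hn.ne' 2 (by norm_num)
  -- a ≥ 2
  have hcop : Nat.Coprime (2 ^ 2) m := (Nat.coprime_two_left.mpr
    (Nat.odd_iff.mpr (Nat.two_dvd_ne_zero.mp hm))).pow_left 2
  have h4a : (2 : ℕ) ^ 2 ∣ 2 ^ a := hcop.dvd_of_dvd_mul_right (by exact_mod_cast h4)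
  have ha2 : 2 ≤ a := (Nat.pow_dvd_pow_iff_le_right (by norm_num)).mp h4a
  obtain ⟨b, rfl⟩ : ∃ b, a = b + 2 := ⟨a - 2, by omega⟩
  obtain ⟨l, hlk⟩ := hev
  have hl2 : k = 2 * l := by omega
  have hl : 0 < l := by omega
  set q : ℕ := 2 ^ (b + 2) with hq
  set n := q * m with hn'
  -- S k n as a range sum
  have hS : S k n = ∑ j ∈ Finset.range (n + 1), j ^ k := by
    rw [S, Finset.range_eq_Ico,
      Finset.sum_eq_sum_Ico_succ_bot (by omega : 0 < n + 1),
      zero_pow hk.ne', zero_add, Finset.Ico_add_one_right_eq_Icc]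
  have hrange : (∑ j ∈ Finset.range (n + 1), j ^ k)
      = (∑ j ∈ Finset.range n, j ^ k) + n ^ k := Finset.sum_range_succ _ _
  -- n^k ≡ 0 mod q
  have hnk : q ∣ n ^ k := dvd_pow (Dvd.intro m rfl) hk.ne'
  have hb : (∑ j ∈ Finset.range n, j ^ k) ≡ m * (∑ j ∈ Finset.range q, j ^ k) [MOD q] :=
    blocks q k m
  have hkey : (∑ j ∈ Finset.range q, j ^ k) ≡ 2 ^ (b + 1) [MOD q] := by
    rw [hl2]; exact key_sum l hl (b + 1)
  have hfinal : S k n ≡ m * 2 ^ (b + 1) [MOD q] := by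
    rw [hS, hrange]
    calc (∑ j ∈ Finset.range n, j ^ k) + n ^ k
        ≡ m * (∑ j ∈ Finset.range q, j ^ k) + 0 [MOD q] :=
          Nat.ModEq.add hb ((Nat.modEq_zero_iff_dvd).mpr hnk)
      _ = m * (∑ j ∈ Finset.range q, j ^ k) := by ring
      _ ≡ m * 2 ^ (b + 1) [MOD q] := hkey.mul_left m
  have hqS : q ∣ S k n := dvd_trans (Dvd.intro m rfl) hdvd
  have : q ∣ m * 2 ^ (b + 1) :=
    (Nat.modEq_zero_iff_dvd).mp (((Nat.modEq_zero_iff_dvd).mpr hqS).symm.trans hfinal).symm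
  obtain ⟨c, hc⟩ := this
  have h2m : m = 2 * c := by
    have : m * 2 ^ (b + 1) = (2 * c) * 2 ^ (b + 1) := by
      rw [hc, hq]; ring
    exact Nat.eq_of_mul_eq_mul_right (by positivity) this
  exact hm ⟨c, h2m⟩
end

section
/- Let n be a positive multiple of 4 and k a positive even integer. Then n/2 divides S_k(n) if and only if p-1 does not divide k for every odd prime p dividing n. -/
open Finset

def U' (k d : ℕ) : ℕ := ∑ j ∈ Finset.range d, j ^ k

lemma sum_range_zmod {M : Type*} [AddCommMonoid M] (d : ℕ) [NeZero d] (f : ZMod d → M) :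
    ∑ j ∈ range d, f (j : ZMod d) = ∑ x : ZMod d, f x := by
  refine Finset.sum_nbij' (fun j => (j : ZMod d)) (fun x => x.val) ?_ ?_ ?_ ?_ ?_
  · intro a _; exact mem_univ _
  · intro x _; exact mem_range.mpr (ZMod.val_lt x)
  · intro j hj; exact ZMod.val_cast_of_lt (mem_range.mp hj)
  · intro x _; simp [ZMod.natCast_val, ZMod.cast_id]
  · intro j _; rfl

lemma U_cast (k d : ℕ) [NeZero d] : ((U' k d : ℕ) : ZMod d) = ∑ x : ZMod d, x ^ k := by
  unfold U'
  push_cast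
  exact sum_range_zmod d (fun x => x ^ k)

lemma S_block (k d : ℕ) (hd : 0 < d) (c : ℕ) :
    ((S k (c * d) : ℕ) : ZMod d) = (c : ZMod d) * ((U' k d : ℕ) : ZMod d) := by
  haveI : NeZero d := ⟨hd.ne'⟩
  induction c with
  | zero => simp [S]
  | succ c ih =>
    have h0 : ∀ x : ℕ, Finset.Icc 1 x = Finset.Ioc 0 x := fun x => by
      rw [← Finset.Icc_add_one_left_eq_Ioc, zero_add]
    have hsplit : S k ((c + 1) * d) = S k (c * d) + ∑ j ∈ Ioc (c * d) (c * d + d), j ^ k := by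
      unfold S
      rw [h0, h0, show (c + 1) * d = c * d + d from by ring,
        ← Finset.sum_Ioc_consecutive (fun j => j ^ k) (Nat.zero_le (c * d))
        (Nat.le_add_right (c * d) d)]
    have key : (∑ j ∈ Ioc (c * d) (c * d + d), ((j : ℕ) : ZMod d) ^ k)
        = ((U' k d : ℕ) : ZMod d) := by
      rw [← Finset.Ico_add_one_add_one_eq_Ioc, Finset.sum_Ico_eq_sum_range]
      have hb : c * d + d + 1 - (c * d + 1) = d := by omega
      rw [hb]
      have hterm : ∀ j : ℕ, ((c * d + 1 + j : ℕ) : ZMod d) ^ k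
          = ((1 : ZMod d) + (j : ℕ)) ^ k := by
        intro j
        push_cast [ZMod.natCast_self]
        ring_nf
      simp only [hterm]
      rw [U_cast]
      have := sum_range_zmod d (fun x => ((1 : ZMod d) + x) ^ k)
      rw [this]
      exact Equiv.sum_comp (Equiv.addLeft (1 : ZMod d)) (fun x => x ^ k)
    rw [hsplit]
    push_cast
    push_cast at ih key
    rw [ih, key]
    ring

lemma S_mod (k d n : ℕ) (hd : 0 < d) (hdn : d ∣ n) :
    ((S k n : ℕ) : ZMod d) = ((n / d : ℕ) : ZMod d) * ((U' k d : ℕ) : ZMod d) := by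
  conv_lhs => rw [← Nat.div_mul_cancel hdn]
  exact S_block k d hd (n / d)

lemma sum_range_mul_eq {M : Type*} [AddCommMonoid M] (f : ℕ → M) (b c : ℕ) :
    ∑ j ∈ range (b * c), f j = ∑ i ∈ range b, ∑ j ∈ range c, f (i * c + j) := by
  induction b with
  | zero => simp
  | succ b ih =>
    rw [show (b + 1) * c = b * c + c from by ring, Finset.sum_range_add, ih,
      Finset.sum_range_succ]

lemma pow_add_of_sq_eq_zero {R : Type*} [CommRing R] (x y : R) (h : y * y = 0) :
    ∀ k : ℕ, (x + y) ^ k = x ^ k + k * x ^ (k - 1) * y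
  | 0 => by simp
  | 1 => by simp
  | (k + 2) => by
    have ih := pow_add_of_sq_eq_zero x y h (k + 1)
    rw [pow_succ, ih]
    push_cast
    linear_combination ((k : R) + 1) * x ^ k * h

lemma U_two (k e : ℕ) : (2 ^ e : ℕ) ∣ U' k (2 ^ (e + 1)) := by
  induction e with
  | zero => simp
  | succ e ih =>
    haveI : NeZero (2 ^ (e + 1)) := ⟨(Nat.pos_of_ne_zero (by positivity)).ne'⟩
    set d := 2 ^ (e + 1) with hd
    have h0 : ((2 : ZMod d)) ^ (e + 1) = 0 := by
      have := ZMod.natCast_self d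
      rw [hd] at this
      push_cast at this
      exact this
    have hsplit : ((U' k (2 ^ (e + 2)) : ℕ) : ZMod d) = 2 * ((U' k d : ℕ) : ZMod d) := by
      unfold U'
      rw [show 2 ^ (e + 2) = 2 ^ (e + 1) + 2 ^ (e + 1) from by ring]
      rw [Finset.sum_range_add]
      push_cast [h0]
      simp only [zero_add]
      ring
    obtain ⟨t, ht⟩ := ih
    have h2U : ((2 * U' k d : ℕ) : ZMod d) = 0 := by
      rw [ht, show 2 * (2 ^ e * t) = d * t from by rw [hd]; ring]
      push_cast [ZMod.natCast_self]
      ring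
    rw [(by push_cast; ring : ((2 * U' k d : ℕ) : ZMod d) = 2 * ((U' k d : ℕ) : ZMod d))] at h2U
    rw [h2U] at hsplit
    exact (ZMod.natCast_eq_zero_iff _ _).mp hsplit

lemma U_recur (p k a : ℕ) (hp : p.Prime) (hodd : Odd p) (ha : 0 < a) :
    ((U' k (p ^ (a + 1)) : ℕ) : ZMod (p ^ (a + 1)))
      = (p : ZMod (p ^ (a + 1))) * ((U' k (p ^ a) : ℕ) : ZMod (p ^ (a + 1))) := by
  have hp1 := hp.one_lt
  haveI : NeZero (p ^ (a + 1)) := ⟨(pow_pos hp.pos _).ne'⟩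
  set d := p ^ (a + 1) with hd
  set P : ZMod d := (p : ZMod d) ^ a with hP
  have hP2 : P * P = 0 := by
    have h2a : ((p ^ (a + a) : ℕ) : ZMod d) = 0 := by
      rw [ZMod.natCast_eq_zero_iff]
      exact pow_dvd_pow p (by omega)
    push_cast at h2a
    rw [hP, ← pow_add]
    exact h2a
  have hodd2 : 2 ∣ p - 1 := by
    obtain ⟨r, hr⟩ := hodd
    omega
  obtain ⟨h2, hh2⟩ := hodd2
  have hgauss : (∑ i ∈ range p, i) = p * h2 := by
    have h := Finset.sum_range_id_mul_two p
    have h2' : (∑ i ∈ range p, i) * 2 = (p * h2) * 2 := by rw [h, hh2]; ring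
    omega
  have hz : ((p ^ (a + 1) : ℕ) : ZMod d) = 0 := by
    rw [ZMod.natCast_eq_zero_iff]
  have hgP : ((∑ i ∈ range p, i : ℕ) : ZMod d) * P = 0 := by
    rw [hgauss, hP]
    push_cast at hz ⊢
    calc (p : ZMod d) * (h2 : ZMod d) * (p : ZMod d) ^ a
        = (p : ZMod d) ^ (a + 1) * (h2 : ZMod d) := by ring
      _ = 0 := by rw [hz, zero_mul]
  have hUd : ((U' k d : ℕ) : ZMod d)
      = ∑ i ∈ range p, ∑ j ∈ range (p ^ a), ((i * p ^ a + j : ℕ) : ZMod d) ^ k := by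
    have h := sum_range_mul_eq (fun j => ((j : ℕ) : ZMod d) ^ k) p (p ^ a)
    rw [← h]
    unfold U'
    rw [show p * p ^ a = d from by rw [hd]; ring]
    push_cast
    rfl
  have hterm : ∀ i j : ℕ, ((i * p ^ a + j : ℕ) : ZMod d) ^ k
      = (j : ZMod d) ^ k + (k : ZMod d) * (j : ZMod d) ^ (k - 1) * ((i : ZMod d) * P) := by
    intro i j
    have hy : ((i : ZMod d) * P) * ((i : ZMod d) * P) = 0 := by
      calc ((i : ZMod d) * P) * ((i : ZMod d) * P)
          = (i : ZMod d) * (i : ZMod d) * (P * P) := by ring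
        _ = 0 := by rw [hP2, mul_zero]
    have hbin := pow_add_of_sq_eq_zero ((j : ℕ) : ZMod d) ((i : ZMod d) * P) hy k
    calc ((i * p ^ a + j : ℕ) : ZMod d) ^ k
        = ((j : ZMod d) + (i : ZMod d) * P) ^ k := by push_cast [hP]; ring
      _ = _ := hbin
  set C : ZMod d := P * ((k : ZMod d) * ∑ j ∈ range (p ^ a), (j : ZMod d) ^ (k - 1)) with hC
  have hrow : ∀ i ∈ range p,
      (∑ j ∈ range (p ^ a),
        ((j : ZMod d) ^ k + (k : ZMod d) * (j : ZMod d) ^ (k - 1) * ((i : ZMod d) * P)))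
      = (∑ j ∈ range (p ^ a), (j : ZMod d) ^ k) + (i : ZMod d) * C := by
    intro i _
    rw [Finset.sum_add_distrib, ← Finset.sum_mul, ← Finset.mul_sum, hC]
    ring
  rw [hUd]
  simp only [hterm]
  rw [Finset.sum_congr rfl hrow, Finset.sum_add_distrib, Finset.sum_const, card_range,
    ← Finset.sum_mul]
  have hsum_i : (∑ i ∈ range p, (i : ZMod d)) = ((∑ i ∈ range p, i : ℕ) : ZMod d) := by
    push_cast; rfl
  rw [hsum_i, show ((∑ i ∈ range p, i : ℕ) : ZMod d) * C = 0 from by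
    rw [hC, ← mul_assoc, hgP, zero_mul], add_zero, nsmul_eq_mul]
  congr 1
  unfold U'
  push_cast
  rfl

lemma unit_of_proj_ne_zero (p e : ℕ) (hp : p.Prime) (he : 0 < e) (x : ZMod (p ^ e))
    (hx : (ZMod.castHom (dvd_pow_self p he.ne') (ZMod p)) x ≠ 0) : IsUnit x := by
  haveI : Fact p.Prime := ⟨hp⟩
  haveI : NeZero (p ^ e) := ⟨(pow_pos hp.pos _).ne'⟩
  have hval : ((x.val : ℕ) : ZMod p) ≠ 0 := by
    rwa [ZMod.natCast_val, ← ZMod.castHom_apply (h := dvd_pow_self p he.ne')]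
  have hnd : ¬ p ∣ x.val := fun h => hval ((ZMod.natCast_eq_zero_iff _ _).mpr h)
  have hcop : Nat.Coprime x.val (p ^ e) :=
    Nat.Coprime.pow_right e ((hp.coprime_iff_not_dvd.mpr hnd).symm)
  have := (ZMod.isUnit_iff_coprime x.val (p ^ e)).mpr hcop
  rwa [ZMod.natCast_val, ZMod.cast_id] at this

lemma U_zero (p k e : ℕ) (hp : p.Prime) (he : 0 < e) (hnd : ¬ (p - 1) ∣ k) :
    (p ^ e : ℕ) ∣ U' k (p ^ e) := by
  haveI : Fact p.Prime := ⟨hp⟩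
  haveI : NeZero (p ^ e) := ⟨(pow_pos hp.pos _).ne'⟩
  rw [← ZMod.natCast_eq_zero_iff, U_cast]
  obtain ⟨g, hg⟩ := IsCyclic.exists_generator (α := (ZMod p)ˣ)
  have horder : orderOf g = p - 1 := by
    rw [orderOf_eq_card_of_forall_mem_zpowers hg, Nat.card_eq_fintype_card, ZMod.card_units]
  have hg1 : ((g : ZMod p)) ^ k ≠ 1 := by
    intro h1
    apply hnd
    rw [← horder]
    refine orderOf_dvd_iff_pow_eq_one.mpr (Units.ext ?_)
    push_cast
    exact h1
  set c : ℕ := ((g : ZMod p)).val with hc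
  have hcp : ((c : ℕ) : ZMod p) = (g : ZMod p) := by
    rw [hc, ZMod.natCast_val, ZMod.cast_id]
  set φ := ZMod.castHom (dvd_pow_self p he.ne') (ZMod p) with hφ
  have hφc : φ ((c : ZMod (p ^ e))) = (c : ZMod p) := by simp [hφ]
  have huc : IsUnit ((c : ℕ) : ZMod (p ^ e)) := by
    apply unit_of_proj_ne_zero p e hp he
    rw [← hφ, hφc, hcp]
    exact Units.ne_zero g
  have hux : IsUnit (((c : ℕ) : ZMod (p ^ e)) ^ k - 1) := by
    apply unit_of_proj_ne_zero p e hp he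
    rw [← hφ, map_sub, map_pow, map_one, hφc, hcp]
    intro h0
    exact hg1 (by rwa [sub_eq_zero] at h0)
  obtain ⟨u, hu⟩ := huc
  have hbij : Function.Bijective (fun x : ZMod (p ^ e) => ((c : ℕ) : ZMod (p ^ e)) * x) := by
    rw [← hu]
    exact Units.mulLeft_bijective u
  have hsum : ∑ x : ZMod (p ^ e), (((c : ℕ) : ZMod (p ^ e)) * x) ^ k
      = ∑ x : ZMod (p ^ e), x ^ k :=
    Function.Bijective.sum_comp hbij (fun x => x ^ k)
  have hsum2 : (((c : ℕ) : ZMod (p ^ e)) ^ k - 1) * ∑ x : ZMod (p ^ e), x ^ k = 0 := by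
    have heq : ∑ x : ZMod (p ^ e), (((c : ℕ) : ZMod (p ^ e)) * x) ^ k
        = ((c : ℕ) : ZMod (p ^ e)) ^ k * ∑ x : ZMod (p ^ e), x ^ k := by
      rw [Finset.mul_sum]
      exact Finset.sum_congr rfl fun x _ => by rw [mul_pow]
    rw [heq] at hsum
    rw [sub_mul, one_mul, hsum, sub_self]
  exact (hux.mul_right_eq_zero).mp hsum2

lemma U_neg (p k a : ℕ) (hp : p.Prime) (hodd : Odd p) (hk : 0 < k) (hdvd : (p - 1) ∣ k)
    (ha : 0 < a) : ((p : ℤ)) ^ a ∣ (U' k (p ^ a) : ℤ) + (p : ℤ) ^ (a - 1) := by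
  haveI : Fact p.Prime := ⟨hp⟩
  induction a with
  | zero => exact absurd ha (lt_irrefl 0)
  | succ a ih =>
    rcases Nat.eq_zero_or_pos a with rfl | hapos
    · -- base case : p ∣ U' k p + 1
      have h2 : ∀ x : ZMod p, x ^ k = if x = 0 then 0 else 1 := by
        intro x
        by_cases hx : x = 0
        · simp [hx, zero_pow hk.ne']
        · simp only [hx, if_false]
          obtain ⟨t, rfl⟩ := hdvd
          rw [pow_mul, ZMod.pow_card_sub_one_eq_one hx, one_pow]
      have h3 : ((U' k (p ^ 1) : ℕ) : ZMod p) = ((p - 1 : ℕ) : ZMod p) := by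
        rw [show p ^ 1 = p from pow_one p, U_cast]
        simp only [h2]
        rw [Finset.sum_ite, Finset.sum_const, Finset.sum_const]
        simp only [smul_zero, zero_add, smul_eq_mul, mul_one]
        congr 1
        rw [Finset.filter_ne', Finset.card_erase_of_mem (mem_univ 0)]
        simp [ZMod.card]
      have h4 : (((U' k (p ^ 1) : ℤ) + (p : ℤ) ^ 0 : ℤ) : ZMod p) = 0 := by
        push_cast
        push_cast at h3
        rw [h3]
        have : ((p : ℕ) : ZMod p) = 0 := ZMod.natCast_self p
        have hcast : ((p - 1 : ℕ) : ZMod p) = (p : ZMod p) - 1 := by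
          push_cast [Nat.cast_sub hp.one_le]
          ring
        rw [hcast] at h3
        rw [hcast]
        simp [ZMod.natCast_self]
      rw [pow_one]
      have := (ZMod.intCast_zmod_eq_zero_iff_dvd _ p).mp h4
      simpa using this
    · have ih' := ih hapos
      have hrec := U_recur p k a hp hodd hapos
      have hrecInt : ((p : ℤ)) ^ (a + 1) ∣
          (p : ℤ) * (U' k (p ^ a) : ℤ) - (U' k (p ^ (a + 1)) : ℤ) := by
        have hcast : ((U' k (p ^ (a + 1)) : ℤ) : ZMod (p ^ (a + 1)))
            = (((p : ℤ) * (U' k (p ^ a) : ℤ) : ℤ) : ZMod (p ^ (a + 1))) := by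
          push_cast
          push_cast at hrec
          exact hrec
        rw [ZMod.intCast_eq_intCast_iff] at hcast
        have hd2 := Int.ModEq.dvd hcast
        push_cast at hd2
        exact hd2
      have hih : ((p : ℤ)) ^ (a + 1) ∣ (p : ℤ) * ((U' k (p ^ a) : ℤ) + (p : ℤ) ^ (a - 1)) := by
        rw [pow_succ, mul_comm ((p:ℤ) ^ a) (p:ℤ)]
        exact mul_dvd_mul_left _ ih'
      have hcomb := dvd_sub hih hrecInt
      have hfinal : (p : ℤ) * ((U' k (p ^ a) : ℤ) + (p : ℤ) ^ (a - 1))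
          - ((p : ℤ) * (U' k (p ^ a) : ℤ) - (U' k (p ^ (a + 1)) : ℤ))
          = (U' k (p ^ (a + 1)) : ℤ) + (p : ℤ) ^ a := by
        have : (p : ℤ) * (p : ℤ) ^ (a - 1) = (p : ℤ) ^ a := by
          rw [← pow_succ']
          congr 1
          omega
        linear_combination this
      rw [hfinal] at hcomb
      simpa using hcomb

theorem half_dvd_powerSum_iff_of_four_dvd_even_exp (n k : ℕ) (hn : 0 < n) (h4 : 4 ∣ n)
    (hk : 0 < k) (hev : Even k) :
    n / 2 ∣ S k n ↔ ∀ p : ℕ, p.Prime → Odd p → p ∣ n → ¬ (p - 1) ∣ k := by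
  have h2n : 2 ∣ n := dvd_trans (by norm_num) h4
  have hnm : n = 2 * (n / 2) := (Nat.mul_div_cancel' h2n).symm
  have hm0 : 0 < n / 2 := Nat.div_pos (by omega) (by norm_num)
  constructor
  · intro hdvd p pp podd hpn hk1
    haveI : Fact p.Prime := ⟨pp⟩
    set a := n.factorization p with hadef
    have ha : 0 < a := pp.factorization_pos_of_dvd hn.ne' hpn
    have hpan : p ^ a ∣ n := Nat.ordProj_dvd n p
    have hp2 : p ≠ 2 := by
      rintro rfl
      rw [Nat.odd_iff] at podd
      omega
    have hcop2 : Nat.Coprime (p ^ a) 2 :=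
      Nat.Coprime.pow_left a ((Nat.coprime_primes pp Nat.prime_two).mpr hp2)
    have hpam : p ^ a ∣ n / 2 := by
      apply (Nat.Coprime.dvd_of_dvd_mul_left hcop2)
      rw [← hnm]
      exact hpan
    have hpaS : p ^ a ∣ S k n := hpam.trans hdvd
    have hmod := S_mod k (p ^ a) n (pow_pos pp.pos a) hpan
    have hS0 : ((S k n : ℕ) : ZMod (p ^ a)) = 0 :=
      (ZMod.natCast_eq_zero_iff _ _).mpr hpaS
    rw [hS0] at hmod
    have hprod : p ^ a ∣ (n / p ^ a) * U' k (p ^ a) := by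
      rw [← ZMod.natCast_eq_zero_iff]
      push_cast
      push_cast at hmod
      exact hmod.symm
    have hcop : Nat.Coprime (p ^ a) (n / p ^ a) :=
      Nat.Coprime.pow_left a (pp.coprime_iff_not_dvd.mpr (Nat.not_dvd_ordCompl pp hn.ne'))
    have hUdvd : p ^ a ∣ U' k (p ^ a) := hcop.dvd_of_dvd_mul_left hprod
    have hneg := U_neg p k a pp (pp.odd_of_ne_two hp2) hk hk1 ha
    have hUdvdZ : ((p : ℤ)) ^ a ∣ (U' k (p ^ a) : ℤ) := by
      have := Int.natCast_dvd_natCast.mpr hUdvd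
      push_cast at this
      exact this
    have hpow : ((p : ℤ)) ^ a ∣ (p : ℤ) ^ (a - 1) := (dvd_add_right hUdvdZ).mp hneg
    have : p ^ a ∣ p ^ (a - 1) := by exact_mod_cast hpow
    have := (Nat.pow_dvd_pow_iff_le_right pp.one_lt).mp this
    omega
  · intro h
    have hS0 : S k n ≠ 0 := by
      have hpos : 0 < S k n := by
        apply Finset.sum_pos
        · intro j hj
          have := (Finset.mem_Icc.mp hj).1
          positivity
        · exact ⟨1, Finset.mem_Icc.mpr ⟨le_refl 1, hn⟩⟩
      omega
    rw [← Nat.factorization_le_iff_dvd hm0.ne' hS0, Finsupp.le_def]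
    intro p
    by_cases pp : p.Prime
    swap
    · simp [Nat.factorization_eq_zero_of_not_prime _ pp]
    set e := (n / 2).factorization p with hedef
    rcases Nat.eq_zero_or_pos e with he | he
    · simp [he]
    rw [← Nat.Prime.pow_dvd_iff_le_factorization pp hS0]
    have hpe_m : p ^ e ∣ n / 2 := Nat.ordProj_dvd _ p
    have hm_n : n / 2 ∣ n := ⟨2, by omega⟩
    by_cases hp2 : p = 2
    · subst hp2
      have h2n' : 2 ^ (e + 1) ∣ n := by
        rw [hnm, pow_succ']
        exact mul_dvd_mul_left 2 hpe_m
      have hmod := S_mod k (2 ^ (e + 1)) n (pow_pos (by norm_num) _) h2n'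
      have hMe : S k n ≡ (n / 2 ^ (e + 1)) * U' k (2 ^ (e + 1)) [MOD 2 ^ (e + 1)] := by
        rw [← ZMod.natCast_eq_natCast_iff]
        push_cast
        push_cast at hmod
        exact hmod
      have hMe' : S k n ≡ (n / 2 ^ (e + 1)) * U' k (2 ^ (e + 1)) [MOD 2 ^ e] :=
        Nat.ModEq.of_dvd (pow_dvd_pow 2 (Nat.le_succ e)) hMe
      have hrhs : 2 ^ e ∣ (n / 2 ^ (e + 1)) * U' k (2 ^ (e + 1)) :=
        Dvd.dvd.mul_left (U_two k e) _
      have : S k n ≡ 0 [MOD 2 ^ e] := hMe'.trans ((Nat.modEq_zero_iff_dvd).mpr hrhs)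
      exact (Nat.modEq_zero_iff_dvd).mp this
    · have podd : Odd p := pp.odd_of_ne_two hp2
      have hpm : p ∣ n / 2 := Nat.dvd_of_factorization_pos he.ne'
      have hpn : p ∣ n := hpm.trans hm_n
      have hnd := h p pp podd hpn
      have hpen : p ^ e ∣ n := hpe_m.trans hm_n
      have hmod := S_mod k (p ^ e) n (pow_pos pp.pos _) hpen
      have hU := U_zero p k e pp he hnd
      have hUz : ((U' k (p ^ e) : ℕ) : ZMod (p ^ e)) = 0 :=
        (ZMod.natCast_eq_zero_iff _ _).mpr hU
      rw [hUz, mul_zero] at hmod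
      exact (ZMod.natCast_eq_zero_iff _ _).mp hmod
end

section
/- Let n and k be positive integers. Then n divides S_k(n) if and only if either (i) n is odd and p-1 does not divide k for every prime p dividing n, or (ii) 4 divides n and k > 1 is odd. -/
open Finset

lemma pow_add_sub (x c : ℤ) : ∀ k : ℕ, c^2 ∣ (x+c)^(k+1) - (x^(k+1) + ((k:ℤ)+1)*c*x^k)
  | 0 => by ring_nf; simp
  | (k+1) => by
    obtain ⟨d, hd⟩ := pow_add_sub x c k
    refine ⟨(x+c)*d + ((k:ℤ)+1)*x^k, ?_⟩
    push_cast
    linear_combination (x+c)*hd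

lemma S_succ_block (k m t : ℕ) : S k (m*(t+1)) = S k (m*t) + ∑ r ∈ Icc 1 m, (m*t + r)^k := by
  have h1 : ∀ n : ℕ, Icc 1 n = Ioc 0 n := fun n => by ext x; simp; omega
  have h2 : Finset.map (addLeftEmbedding (m*t)) (Ioc 0 m) = Ioc (m*t) (m*t + m) := by
    rw [Finset.map_add_left_Ioc]; simp
  have h3 := Finset.sum_Ioc_consecutive (fun j => j^k) (Nat.zero_le (m*t))
      (by rw [Nat.mul_succ]; omega : m*t ≤ m*(t+1))
  simp only [S, h1]
  rw [← h3]
  congr 1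
  have : Ioc (m*t) (m*(t+1)) = Ioc (m*t) (m*t+m) := by rw [Nat.mul_succ]
  rw [this, ← h2, Finset.sum_map]
  apply Finset.sum_congr rfl
  intro r _
  simp [addLeftEmbedding]

lemma S_mul (k' m t : ℕ) :
    (m^2 : ℤ) ∣ (S (k'+1) (m*t) : ℤ) -
      ((t : ℤ) * S (k'+1) m + ((k':ℤ)+1) * m * (∑ a ∈ range t, (a:ℤ)) * S k' m) := by
  induction t with
  | zero => simp [S]
  | succ t ih =>
    rw [S_succ_block]
    have key : (m^2:ℤ) ∣ (∑ r ∈ Icc 1 m, ((m*t + r : ℕ) : ℤ)^(k'+1)) -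
        ((S (k'+1) m : ℤ) + ((k':ℤ)+1)*(m*t)*(S k' m : ℤ)) := by
      have : (S (k'+1) m : ℤ) = ∑ r ∈ Icc 1 m, (r:ℤ)^(k'+1) := by simp [S]
      rw [this]
      have : (S k' m : ℤ) = ∑ r ∈ Icc 1 m, (r:ℤ)^k' := by simp [S]
      rw [this, Finset.mul_sum, ← Finset.sum_add_distrib, ← Finset.sum_sub_distrib]
      apply Finset.dvd_sum
      intro r _
      have h := pow_add_sub (r:ℤ) ((m:ℤ)*t) k'
      have h2 : ((m:ℤ)*t)^2 = m^2 * t^2 := by ring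
      have h3 : (m^2:ℤ) ∣ ((m:ℤ)*t)^2 := ⟨t^2, h2⟩
      refine dvd_trans h3 ?_
      convert h using 2
      · rfl
      push_cast
      ring
    rw [Finset.sum_range_succ]
    push_cast
    have := dvd_add ih key
    convert this using 1
    · rfl
    push_cast
    ring

lemma dvd_iff_of_dvd_sub {a b c : ℤ} (h : a ∣ b - c) : (a ∣ b ↔ a ∣ c) := by
  constructor
  · intro hb; have := dvd_sub hb h; rwa [sub_sub_cancel] at this
  · intro hc; have := dvd_add h hc; rwa [sub_add_cancel] at this

-- mod m reduction: S k (m*t) ≡ t * S k m  [mod m]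
lemma S_mod_s10 (k m t : ℕ) (hk : 0 < k) :
    (m : ℤ) ∣ (S k (m*t) : ℤ) - (t : ℤ) * S k m := by
  obtain ⟨k', rfl⟩ : ∃ k', k = k' + 1 := ⟨k - 1, by omega⟩
  have h := S_mul k' m t
  have h2 : (m:ℤ) ∣ ((k':ℤ)+1) * m * (∑ a ∈ range t, (a:ℤ)) * S k' m :=
    ⟨((k':ℤ)+1) * (∑ a ∈ range t, (a:ℤ)) * S k' m, by ring⟩
  have h3 : (m:ℤ) ∣ (m:ℤ)^2 := ⟨m, by ring⟩
  have := dvd_add (h3.trans h) h2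
  convert this using 1
  · rfl
  ring

lemma gauss_int (t : ℕ) : (2:ℤ) * ∑ a ∈ range t, (a:ℤ) = t * (t-1) := by
  induction t with
  | zero => simp
  | succ t ih => rw [Finset.sum_range_succ]; push_cast; push_cast at ih; linarith

-- step for odd p, e ≥ 2
lemma odd_step (p : ℕ) (hp : p.Prime) (hodd : Odd p) (k e : ℕ) (hk : 0 < k) (he : 2 ≤ e) :
    ((p:ℤ)^e) ∣ (S k (p^e) : ℤ) - (p : ℤ) * S k (p^(e-1)) := by
  obtain ⟨k', rfl⟩ : ∃ k', k = k' + 1 := ⟨k - 1, by omega⟩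
  have hpe : p^(e-1) * p = p^e := by
    rw [← pow_succ]; congr 1; omega
  have h := S_mul k' (p^(e-1)) p
  rw [hpe] at h
  -- p ∣ gauss sum
  obtain ⟨u, hu⟩ := hodd
  have hg : (p:ℤ) ∣ ∑ a ∈ range p, (a:ℤ) := by
    refine ⟨u, ?_⟩
    have := gauss_int p
    have h2 : ((p:ℤ) - 1) = 2 * u := by push_cast [hu]; ring
    have h3 : (2:ℤ) * ∑ a ∈ range p, (a:ℤ) = 2 * (p * u) := by rw [this, h2]; ring
    linarith [mul_left_cancel₀ (by norm_num : (2:ℤ) ≠ 0) h3]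
  have h2 : ((p:ℤ)^e) ∣ ((k':ℤ)+1) * (p^(e-1):ℕ) * (∑ a ∈ range p, (a:ℤ)) * S k' (p^(e-1)) := by
    obtain ⟨u, hu⟩ := hg
    refine ⟨((k':ℤ)+1) * u * S k' (p^(e-1)), ?_⟩
    rw [hu]
    push_cast
    rw [show ((p:ℤ))^e = p^(e-1) * p by rw [← pow_succ]; congr 1; omega]
    ring
  have h3 : ((p:ℤ)^e) ∣ ((p^(e-1):ℕ) : ℤ)^2 := by
    push_cast
    rw [← pow_mul]
    exact pow_dvd_pow _ (by omega)
  have := dvd_add (h3.trans h) h2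
  convert this using 1
  · rfl
  push_cast
  ring

lemma sum_zmod' (N : ℕ) [NeZero N] (f : ZMod N → ZMod N) :
    ∑ j ∈ range N, f (j : ZMod N) = ∑ x : ZMod N, f x := by
  refine Finset.sum_nbij' (fun j => (j : ZMod N)) (fun x => x.val) ?_ ?_ ?_ ?_ ?_
  · intro a _; exact mem_univ _
  · intro a _; exact mem_range.2 (ZMod.val_lt a)
  · intro a ha; simp [ZMod.val_natCast_of_lt (mem_range.1 ha)]
  · intro a _; simp [ZMod.natCast_val, ZMod.cast_id]
  · intro a _; rfl

lemma cast_S (k n N : ℕ) : (S k n : ZMod N) = ∑ j ∈ Icc 1 n, (j : ZMod N) ^ k := by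
  simp [S]

lemma icc_range (N : ℕ) (hN : 0 < N) (f : ℕ → ZMod N) (hf : f 0 = f N) :
    ∑ j ∈ Icc 1 N, f j = ∑ j ∈ range N, f j := by
  have h1 : Icc 1 N = insert N (Ico 1 N) := by ext x; simp; omega
  have h2 : range N = insert 0 (Ico 1 N) := by ext x; simp; omega
  rw [h1, h2, Finset.sum_insert (by simp), Finset.sum_insert (by simp), hf]

lemma S_p (p : ℕ) (hp : p.Prime) (k : ℕ) (hk : 0 < k) :
    (S k p : ZMod p) = if (p - 1) ∣ k then -1 else 0 := by
  haveI : Fact p.Prime := ⟨hp⟩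
  rw [cast_S, icc_range p hp.pos _ (by simp)]
  rw [sum_zmod' p (fun x => x ^ k)]
  have h0 : ∑ x : ZMod p, x ^ k = ∑ x : (ZMod p)ˣ, ((x : ZMod p)) ^ k := by
    have hz : ∀ x ∈ (univ : Finset (ZMod p)),
        x ∉ (univ : Finset (ZMod p)ˣ).image (fun u : (ZMod p)ˣ => (u : ZMod p)) → x ^ k = 0 := by
      intro x _ hx
      have : x = 0 := by
        by_contra h
        exact hx (Finset.mem_image.2 ⟨Units.mk0 x h, mem_univ _, rfl⟩)
      simp [this, zero_pow hk.ne']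
    rw [← Finset.sum_subset (Finset.subset_univ _) hz]
    rw [Finset.sum_image (by intro x _ y _ h; exact Units.ext h)]
  rw [h0]
  have := FiniteField.sum_pow_units (ZMod p) k
  rw [ZMod.card p] at this
  simpa using this

lemma odd_pp (p : ℕ) (hp : p.Prime) (hodd : Odd p) (k : ℕ) (hk : 0 < k) :
    ∀ e, 1 ≤ e → (p^e ∣ S k (p^e) ↔ ¬ (p-1) ∣ k) := by
  haveI : Fact p.Prime := ⟨hp⟩
  intro e he
  induction e, he using Nat.le_induction with
  | base =>
    haveI : NeZero p := ⟨hp.pos.ne'⟩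
    rw [pow_one, ← ZMod.natCast_eq_zero_iff (S k p) p, S_p p hp k hk]
    by_cases h : (p-1) ∣ k
    · simp only [h, if_pos, iff_true, not_true]
      simp only [iff_false, not_true]
      exact fun hc => (neg_ne_zero.2 (one_ne_zero : (1 : ZMod p) ≠ 0)) hc
    · simp [h]
  | succ e he ih =>
    have hstep := odd_step p hp hodd k (e+1) hk (by omega)
    simp only [Nat.add_sub_cancel] at hstep
    have hcast : (p:ℕ)^(e+1) ∣ S k (p^(e+1)) ↔ ((p:ℤ))^(e+1) ∣ (S k (p^(e+1)) : ℤ) := by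
      rw [← Nat.cast_pow, Int.natCast_dvd_natCast]
    rw [hcast, dvd_iff_of_dvd_sub hstep]
    rw [show ((p:ℤ))^(e+1) = p * p^e from by ring]
    rw [mul_dvd_mul_iff_left (by exact_mod_cast hp.pos.ne' : (p:ℤ) ≠ 0)]
    rw [show ((p:ℤ))^e = ((p^e : ℕ) : ℤ) from by push_cast; ring, Int.natCast_dvd_natCast]
    exact ih

lemma two_step (k e : ℕ) (hk : 0 < k) (he : 2 ≤ e) :
    ((2:ℤ)^e) ∣ (S k (2^e) : ℤ) -
      ((2:ℤ) * S k (2^(e-1)) + (k:ℤ) * 2^(e-1) * S (k-1) (2^(e-1))) := by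
  obtain ⟨k', rfl⟩ : ∃ k', k = k' + 1 := ⟨k - 1, by omega⟩
  have hpe : 2^(e-1) * 2 = 2^e := by rw [← pow_succ]; congr 1; omega
  have h := S_mul k' (2^(e-1)) 2
  rw [hpe] at h
  have hg : (∑ a ∈ range 2, (a:ℤ)) = 1 := by decide
  rw [hg] at h
  have h3 : ((2:ℤ)^e) ∣ ((2^(e-1):ℕ) : ℤ)^2 := by
    push_cast
    rw [← pow_mul]
    exact pow_dvd_pow _ (by omega)
  have := h3.trans h
  convert this using 1
  · rfl
  push_cast
  ring

lemma S_one (n : ℕ) : 2 * S 1 n = n * (n + 1) := by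
  have h1 : range (n+1) = insert 0 (Icc 1 n) := by ext x; simp; omega
  have h2 := Finset.sum_range_id_mul_two (n+1)
  rw [h1, Finset.sum_insert (by simp)] at h2
  simp only [Nat.add_sub_cancel, zero_add] at h2
  have h3 : S 1 n = ∑ x ∈ Icc 1 n, x := by simp [S]
  rw [h3, mul_comm 2, mul_comm n]
  exact h2

lemma parity_S (m n : ℕ) (hm : 0 < m) : (2 ∣ S m n ↔ 2 ∣ S 1 n) := by
  have key : ∀ j : ℕ, ((j:ZMod 2))^m = ((j:ZMod 2))^1 := by
    intro j
    have : (j : ZMod 2) = 0 ∨ (j : ZMod 2) = 1 := by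
      rcases Nat.even_or_odd j with h | h
      · left; obtain ⟨t, ht⟩ := h
        rw [ht]; push_cast; ring_nf; simp [show ((2:ZMod 2)) = 0 from rfl]
      · right; obtain ⟨t, ht⟩ := h
        rw [ht]; push_cast; simp [show ((2:ZMod 2)) = 0 from rfl]
    rcases this with h | h <;> rw [h]
    · rw [zero_pow hm.ne', zero_pow one_ne_zero]
    · simp
  rw [← ZMod.natCast_eq_zero_iff, ← ZMod.natCast_eq_zero_iff]
  rw [cast_S, cast_S]
  have : ∑ j ∈ Icc 1 n, ((j:ZMod 2))^m = ∑ j ∈ Icc 1 n, ((j:ZMod 2))^1 :=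
    Finset.sum_congr rfl (fun j _ => key j)
  rw [this]

lemma even_S_two_pow (m f : ℕ) (hm : 0 < m) (hf : 2 ≤ f) : 2 ∣ S m (2^f) := by
  rw [parity_S m _ hm]
  have h := S_one (2^f)
  have h4 : (2:ℕ)^f = 4 * 2^(f-2) := by
    have hf2 : f - 2 + 2 = f := by omega
    conv_lhs => rw [← hf2]
    rw [pow_add]; ring
  have h5 : 2 * S 1 (2^f) = 2 * (2 * (2^(f-2) * (2^f+1))) := by rw [h, h4]; ring
  have h6 := Nat.eq_of_mul_eq_mul_left (by norm_num) h5
  exact ⟨_, h6⟩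

lemma S_two (k : ℕ) : S k 2 = 1 + 2^k := by
  rw [S, show Icc 1 2 = ({1, 2} : Finset ℕ) from rfl]
  simp

lemma two_pow_pos (k : ℕ) (hk1 : 1 < k) (hkodd : Odd k) :
    ∀ e, 2 ≤ e → (2:ℕ)^e ∣ S k (2^e) := by
  intro e he
  have hk : 0 < k := by omega
  induction e, he using Nat.le_induction with
  | base =>
    have hstep := two_step k 2 hk (le_refl 2)
    norm_num at hstep
    obtain ⟨j, hj⟩ := hkodd
    have hj1 : 1 ≤ j := by omega
    have hk3 : 3 ≤ k := by omega
    have hc3 : k - 3 + 3 = k := by omega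
    have e1 : (2:ℤ)^k = 2^(k-3) * 8 := by
      conv_lhs => rw [← hc3]
      rw [pow_add]; ring
    have e2 : (2:ℤ)^(k-1) = 2^(k-3) * 4 := by
      have : k - 3 + 2 = k - 1 := by omega
      rw [← this, pow_add]; ring
    have hX : (4:ℤ) ∣ ((2:ℤ) * S k 2 + (k:ℤ) * 2 * S (k-1) 2) := by
      rw [S_two k, S_two (k-1)]
      push_cast
      rw [e1, e2]
      refine ⟨(j:ℤ) + 1 + 2^(k-3)*6 + (j:ℤ)*2^(k-3)*4, ?_⟩
      have hkz : (k:ℤ) = 2*j+1 := by exact_mod_cast congrArg (Nat.cast : ℕ → ℤ) hj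
      rw [hkz]
      ring
    have hdvd := dvd_add hstep hX
    rw [sub_add_cancel] at hdvd
    have : (4:ℕ) ∣ S k 4 := by exact_mod_cast hdvd
    norm_num
    exact this
  | succ e he ih =>
    have hstep := two_step k (e+1) hk (by omega)
    simp only [Nat.add_sub_cancel] at hstep
    have h1 : ((2:ℤ)^(e+1)) ∣ (2:ℤ) * S k (2^e) := by
      obtain ⟨d, hd⟩ := ih
      refine ⟨d, ?_⟩
      rw [show (S k (2^e) : ℤ) = ((2^e * d : ℕ) : ℤ) from by rw [← hd]]
      push_cast
      ring
    have h2 : ((2:ℤ)^(e+1)) ∣ (k:ℤ) * 2^e * S (k-1) (2^e) := by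
      obtain ⟨d, hd⟩ := even_S_two_pow (k-1) e (by omega) he
      refine ⟨(k:ℤ) * d, ?_⟩
      rw [show (S (k-1) (2^e) : ℤ) = ((2 * d : ℕ) : ℤ) from by rw [← hd]]
      push_cast
      ring
    have := dvd_add hstep (dvd_add h1 h2)
    rw [sub_add_cancel] at this
    exact_mod_cast this

lemma two_neg_e1 (k : ℕ) (hk : 0 < k) : ¬ 2 ∣ S k 2 := by
  rw [S_two]
  have h2 : 2 ∣ 2^k := dvd_pow_self 2 hk.ne'
  omega

lemma two_neg_k1 (e : ℕ) (he : 1 ≤ e) : ¬ 2^e ∣ S 1 (2^e) := by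
  intro ⟨d, hd⟩
  have h := S_one (2^e)
  rw [hd] at h
  have h2 : (2:ℕ)^e = 2 * 2^(e-1) := by
    have : e - 1 + 1 = e := by omega
    conv_lhs => rw [← this]
    ring
  -- 2 * (2^e * d) = 2^e * (2^e+1)  ⇒  2*d = 2^e + 1, even = odd
  have h3 : 2 * d = 2^e + 1 := by
    have := Nat.eq_of_mul_eq_mul_left (show 0 < 2^e by positivity)
      (show 2^e * (2*d) = 2^e * (2^e+1) by rw [← h]; ring)
    exact this
  omega

lemma two_neg_even (k : ℕ) (hk : 0 < k) (hke : Even k) :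
    ∀ e, 2 ≤ e → ∃ d : ℤ, (S k (2^e) : ℤ) = 2^(e-1) + 2^e * d := by
  intro e he
  obtain ⟨j, hj⟩ := hke
  have hj1 : 1 ≤ j := by omega
  have hkz : (k:ℤ) = 2*j := by exact_mod_cast congrArg (Nat.cast : ℕ → ℤ) (by omega : k = 2*j)
  induction e, he using Nat.le_induction with
  | base =>
    have hstep := two_step k 2 hk (le_refl 2)
    norm_num at hstep
    obtain ⟨c, hc⟩ := hstep
    rw [S_two k, S_two (k-1)] at hc
    refine ⟨2^(k-1) + j + j*2^(k-1) + c, ?_⟩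
    have e1 : (2:ℤ)^k = 2^(k-1) * 2 := by
      have : k - 1 + 1 = k := by omega
      conv_lhs => rw [← this]
      rw [pow_add]; ring
    have hc' : (S k 4 : ℤ) = 2 * (1 + 2^k) + (k:ℤ)*2*(1 + 2^(k-1)) + 4*c := by
      push_cast at hc ⊢
      linarith
    norm_num only
    rw [hc', e1, hkz]
    push_cast
    ring
  | succ e he ih =>
    obtain ⟨d, hd⟩ := ih
    have hstep := two_step k (e+1) hk (by omega)
    simp only [Nat.add_sub_cancel] at hstep
    obtain ⟨c, hc⟩ := hstep
    obtain ⟨x, hx⟩ := even_S_two_pow (k-1) e (by omega) he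
    refine ⟨d + 2 * j * x + c, ?_⟩
    have hxz : (S (k-1) (2^e) : ℤ) = 2 * x := by exact_mod_cast congrArg (Nat.cast : ℕ → ℤ) hx
    have hSe : (S k (2^(e+1)) : ℤ) = 2 * (S k (2^e) : ℤ) + (k:ℤ)*2^e*(S (k-1) (2^e)) + 2^(e+1)*c := by
      linarith [hc]
    rw [hSe, hd, hxz, hkz]
    simp only [Nat.add_sub_cancel]
    have h1 : (2:ℤ)^(e+1) = 2^e * 2 := by ring
    have h2 : (2:ℤ)^e = 2^(e-1) * 2 := by
      have : e - 1 + 1 = e := by omega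
      conv_lhs => rw [← this]
      rw [pow_add]; ring
    rw [h1, h2]
    ring

lemma two_pp (k e : ℕ) (hk : 0 < k) (he : 1 ≤ e) :
    (2:ℕ)^e ∣ S k (2^e) ↔ (2 ≤ e ∧ 1 < k ∧ Odd k) := by
  constructor
  · intro h
    rcases Nat.lt_or_ge e 2 with he2 | he2
    · exfalso
      have : e = 1 := by omega
      subst this
      rw [pow_one] at h
      exact two_neg_e1 k hk h
    refine ⟨he2, ?_⟩
    by_contra hcon
    rcases Nat.even_or_odd k with hke | hko
    · obtain ⟨d, hd⟩ := two_neg_even k hk hke e he2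
      have h2 : ((2:ℤ)^e) ∣ (S k (2^e) : ℤ) := by exact_mod_cast h
      rw [hd] at h2
      have h3 : ((2:ℤ)^e) ∣ (2:ℤ)^(e-1) := by
        have := dvd_sub h2 (Dvd.intro d rfl)
        simpa using this
      have h4 := Int.le_of_dvd (by positivity) h3
      have h5 : (2:ℤ)^(e-1) < 2^e := by
        apply pow_lt_pow_right₀ (by norm_num)
        omega
      omega
    · have hk1 : k = 1 := by
        rcases Nat.lt_or_ge 1 k with h1 | h1
        · exact absurd ⟨h1, hko⟩ hcon
        · omega
      subst hk1
      exact two_neg_k1 e he h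
  · rintro ⟨he2, hk1, hko⟩
    exact two_pow_pos k hk1 hko e he2

lemma key_local (p e k : ℕ) (hp : p.Prime) (he : 1 ≤ e) (hk : 0 < k) :
    p^e ∣ S k (p^e) ↔
      ((Odd p ∧ ¬ (p-1) ∣ k) ∨ (p = 2 ∧ 2 ≤ e ∧ 1 < k ∧ Odd k)) := by
  rcases eq_or_ne p 2 with rfl | hp2
  · rw [two_pp k e hk he]
    constructor
    · intro h; exact Or.inr ⟨rfl, h⟩
    · rintro (⟨h, _⟩ | ⟨_, h⟩)
      · exact absurd h (by decide)
      · exact h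
  · have hodd : Odd p := hp.odd_of_ne_two hp2
    rw [odd_pp p hp hodd k hk e he]
    constructor
    · intro h; exact Or.inl ⟨hodd, h⟩
    · rintro (⟨_, h⟩ | ⟨h, _⟩)
      · exact h
      · exact absurd h hp2

lemma transfer (n p k : ℕ) (hn : 0 < n) (hp : p.Prime) (hk : 0 < k) :
    (p^(n.factorization p) ∣ S k n ↔ p^(n.factorization p) ∣ S k (p^(n.factorization p))) := by
  set e := n.factorization p with he
  set t := ordCompl[p] n with ht
  have hnt : p^e * t = n := Nat.ordProj_mul_ordCompl_eq_self n p
  have hco : Nat.Coprime (p^e) t := Nat.Coprime.pow_left e (Nat.coprime_ordCompl hp hn.ne')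
  have hmod := S_mod_s10 k (p^e) t hk
  rw [hnt] at hmod
  have cast1 : (p^e ∣ S k n) ↔ ((p^e : ℕ) : ℤ) ∣ (S k n : ℤ) := by
    rw [Int.natCast_dvd_natCast]
  have cast2 : (p^e ∣ t * S k (p^e)) ↔ ((p^e : ℕ) : ℤ) ∣ ((t : ℤ) * S k (p^e)) := by
    rw [show ((t : ℤ) * S k (p^e)) = ((t * S k (p^e) : ℕ) : ℤ) from by push_cast; ring,
      Int.natCast_dvd_natCast]
  have hiff : p^e ∣ S k n ↔ p^e ∣ t * S k (p^e) := by
    rw [cast1, cast2]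
    exact dvd_iff_of_dvd_sub (by exact_mod_cast hmod)
  rw [hiff]
  constructor
  · intro h
    exact hco.dvd_of_dvd_mul_left h
  · intro h
    exact h.mul_left t

lemma S_pos (k n : ℕ) (hn : 0 < n) : 0 < S k n := by
  apply Finset.sum_pos
  · intro j hj
    have : 1 ≤ j := (Finset.mem_Icc.1 hj).1
    positivity
  · exact ⟨1, Finset.mem_Icc.2 ⟨le_refl 1, hn⟩⟩

theorem dvd_powerSum_iff (n k : ℕ) (hn : 0 < n) (hk : 0 < k) :
    n ∣ S k n ↔
      (Odd n ∧ ∀ p : ℕ, p.Prime → p ∣ n → ¬ (p - 1) ∣ k) ∨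
      (4 ∣ n ∧ 1 < k ∧ Odd k) := by
  constructor
  · intro h
    have hlocal : ∀ p : ℕ, p.Prime → p ∣ n →
        ((Odd p ∧ ¬ (p-1) ∣ k) ∨ (p = 2 ∧ 2 ≤ n.factorization p ∧ 1 < k ∧ Odd k)) := by
      intro p pp pn
      have he : 1 ≤ n.factorization p := (pp.factorization_pos_of_dvd hn.ne' pn)
      have h1 : p^(n.factorization p) ∣ S k n := (Nat.ordProj_dvd n p).trans h
      rw [transfer n p k hn pp hk] at h1
      exact (key_local p _ k pp he hk).1 h1
    rcases Nat.even_or_odd n with hne | hno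
    · right
      have h2n : 2 ∣ n := hne.two_dvd
      rcases hlocal 2 Nat.prime_two h2n with ⟨ho, _⟩ | ⟨_, he2, hk1, hko⟩
      · exact absurd ho (by decide)
      · refine ⟨?_, hk1, hko⟩
        have : (2:ℕ)^2 ∣ 2^(n.factorization 2) := pow_dvd_pow 2 he2
        calc (4:ℕ) = 2^2 := by norm_num
          _ ∣ 2^(n.factorization 2) := this
          _ ∣ n := Nat.ordProj_dvd n 2
    · left
      refine ⟨hno, fun p pp pn => ?_⟩
      rcases hlocal p pp pn with ⟨_, hnd⟩ | ⟨rfl, _⟩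
      · exact hnd
      · exact absurd ((even_iff_two_dvd.mpr pn)) (Nat.not_even_iff_odd.2 hno)
  · intro hrhs
    have hS0 : S k n ≠ 0 := (S_pos k n hn).ne'
    rw [← Nat.factorization_le_iff_dvd hn.ne' hS0]
    intro p
    rcases eq_or_ne (n.factorization p) 0 with h0 | h0
    · simp [h0]
    have pp : p.Prime := by
      have hmem : p ∈ n.factorization.support := Finsupp.mem_support_iff.2 h0
      rw [Nat.support_factorization] at hmem
      exact Nat.prime_of_mem_primeFactors hmem
    have pn : p ∣ n := Nat.dvd_of_factorization_pos h0
    have he : 1 ≤ n.factorization p := Nat.pos_of_ne_zero h0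
    rw [← pp.pow_dvd_iff_le_factorization hS0]
    rw [transfer n p k hn pp hk]
    rw [key_local p _ k pp he hk]
    rcases hrhs with ⟨hno, hall⟩ | ⟨h4, hk1, hko⟩
    · have hp2 : p ≠ 2 := by
        rintro rfl
        exact (Nat.not_even_iff_odd.2 hno) ((even_iff_two_dvd.mpr pn))
      exact Or.inl ⟨pp.odd_of_ne_two hp2, hall p pp pn⟩
    · rcases eq_or_ne p 2 with rfl | hp2
      · refine Or.inr ⟨rfl, ?_, hk1, hko⟩
        rw [← Nat.Prime.pow_dvd_iff_le_factorization Nat.prime_two hn.ne']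
        calc (2:ℕ)^2 = 4 := by norm_num
          _ ∣ n := h4
      · have hodd : Odd p := pp.odd_of_ne_two hp2
        refine Or.inl ⟨hodd, fun hdk => ?_⟩
        have h2p : 2 ∣ p - 1 := by
          obtain ⟨u, hu⟩ := hodd
          exact ⟨u, by omega⟩
        have : 2 ∣ k := h2p.trans hdk
        exact (Nat.not_even_iff_odd.2 hko) (even_iff_two_dvd.mpr this)
end

section
/- Let m > 1 and k a positive even integer. Then S_k(2^m) \equiv 2^{m-1} (mod 2^m). -/
lemma shift_pow (N : ℕ) (h x : ZMod N) (h1 : 2 * h = 0) (h2 : h ^ 2 = 0) (c : ℕ) :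
    (h + x) ^ (2 * c) = x ^ (2 * c) := by
  have hsq : (h + x) ^ 2 = x ^ 2 := by
    have : (h + x) ^ 2 = x ^ 2 + x * (2 * h) + h ^ 2 := by ring
    rw [this, h1, h2]; ring
  rw [pow_mul, pow_mul, hsq]

lemma range_sum_mod (k : ℕ) (hk : 0 < k) (hev : Even k) :
    ∀ m, 1 ≤ m → (∑ j ∈ Finset.range (2 ^ m), j ^ k) ≡ 2 ^ (m - 1) [MOD 2 ^ m] := by
  intro m
  induction m with
  | zero => omega
  | succ m ih =>
    intro _
    rcases Nat.eq_or_lt_of_le (Nat.one_le_iff_ne_zero.mpr (Nat.succ_ne_zero m)) with h | h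
    · -- m + 1 = 1
      have hm0 : m = 0 := by omega
      subst hm0
      simp [Finset.sum_range_succ, Nat.zero_pow hk]
      rfl
    · have hm1 : 1 ≤ m := by omega
      have IH := ih hm1
      obtain ⟨c, hc⟩ := hev
      have hkc : k = 2 * c := by omega
      -- split the sum
      have hsplit : (∑ j ∈ Finset.range (2 ^ (m + 1)), j ^ k)
          = (∑ j ∈ Finset.range (2 ^ m), j ^ k)
            + ∑ j ∈ Finset.range (2 ^ m), (2 ^ m + j) ^ k := by
        have : 2 ^ (m + 1) = 2 ^ m + 2 ^ m := by ring
        rw [this, Finset.sum_range_add]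
      -- second sum ≡ first sum mod 2^(m+1), via ZMod
      have hcong : (∑ j ∈ Finset.range (2 ^ m), (2 ^ m + j) ^ k)
          ≡ (∑ j ∈ Finset.range (2 ^ m), j ^ k) [MOD 2 ^ (m + 1)] := by
        rw [← ZMod.natCast_eq_natCast_iff]
        push_cast
        apply Finset.sum_congr rfl
        intro j _
        have h1 : 2 * ((2 : ZMod (2 ^ (m + 1))) ^ m) = 0 := by
          have : ((2 ^ (m + 1) : ℕ) : ZMod (2 ^ (m + 1))) = 0 := by
            exact_mod_cast ZMod.natCast_self _
          push_cast at this
          rw [← this]; ring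
        have h2 : ((2 : ZMod (2 ^ (m + 1))) ^ m) ^ 2 = 0 := by
          have hd : (2 ^ (m + 1) : ℕ) ∣ 2 ^ (2 * m) := pow_dvd_pow 2 (by omega)
          have : ((2 ^ (2 * m) : ℕ) : ZMod (2 ^ (m + 1))) = 0 :=
            (ZMod.natCast_eq_zero_iff _ _).mpr hd
          push_cast at this
          rw [← this]; ring
        rw [hkc]
        exact shift_pow _ _ _ h1 h2 c
      -- combine
      have : (∑ j ∈ Finset.range (2 ^ (m + 1)), j ^ k)
          ≡ 2 * (∑ j ∈ Finset.range (2 ^ m), j ^ k) [MOD 2 ^ (m + 1)] := by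
        rw [hsplit, two_mul]
        exact Nat.ModEq.add_left _ hcong
      refine this.trans ?_
      have := Nat.ModEq.mul_left' (c := 2) IH
      have h2m : 2 * 2 ^ m = 2 ^ (m + 1) := by ring
      have h2p : 2 * 2 ^ (m - 1) = 2 ^ m := by
        rw [← pow_succ']; congr 1; omega
      rw [h2m, h2p] at this
      simpa using this

theorem powerSum_two_pow_even_exp (m k : ℕ) (hm : 1 < m) (hk : 0 < k) (hev : Even k) :
    S k (2 ^ m) ≡ 2 ^ (m - 1) [MOD 2 ^ m] := by
  have key := range_sum_mod k hk hev m (by omega)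
  have hS : S k (2 ^ m) + 0 ^ k = (∑ j ∈ Finset.range (2 ^ m), j ^ k) + (2 ^ m) ^ k := by
    unfold S
    rw [← Finset.sum_range_succ]
    rw [Finset.range_eq_Ico, Finset.sum_eq_sum_Ico_succ_bot (by positivity)]
    rw [Finset.Ico_add_one_right_eq_Icc, add_comm]
  have hz : (0 : ℕ) ^ k = 0 := Nat.zero_pow hk
  have hdvd : (2 ^ m : ℕ) ∣ (2 ^ m) ^ k := dvd_pow_self _ hk.ne'
  have h0 : ((2 ^ m) ^ k : ℕ) ≡ 0 [MOD 2 ^ m] := (Nat.modEq_zero_iff_dvd).mpr hdvd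
  have : S k (2 ^ m) = (∑ j ∈ Finset.range (2 ^ m), j ^ k) + (2 ^ m) ^ k := by omega
  rw [this]
  calc (∑ j ∈ Finset.range (2 ^ m), j ^ k) + (2 ^ m) ^ k
      ≡ 2 ^ (m - 1) + 0 [MOD 2 ^ m] := Nat.ModEq.add key h0
    _ = 2 ^ (m - 1) := by ring
end

section
/- Let n be an odd positive integer, k a positive integer, and suppose p-1 does not divide k for every prime p dividing n. Then \sum_{1 \le j \le n, gcd(j,n)=1} j^k \equiv 0 (mod n). -/
open Finset

lemma aux_sum_zero {n M k : ℕ} [NeZero n] (hMn : M ∣ n) (c : (ZMod n)ˣ)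
    (hc : IsUnit ((ZMod.castHom hMn (ZMod M)) (c : ZMod n) ^ k - 1)) :
    (∑ u : (ZMod n)ˣ, (ZMod.castHom hMn (ZMod M)) (u : ZMod n) ^ k) = 0 := by
  set f := ZMod.castHom hMn (ZMod M) with hf
  set T := ∑ u : (ZMod n)ˣ, f (u : ZMod n) ^ k with hT
  have hre : (∑ u : (ZMod n)ˣ, f (((c * u : (ZMod n)ˣ)) : ZMod n) ^ k) = T :=
    Fintype.sum_equiv (Equiv.mulLeft c) _ _ (fun u => rfl)
  have h2' : f (c : ZMod n) ^ k * T = ∑ u : (ZMod n)ˣ, f (((c * u : (ZMod n)ˣ)) : ZMod n) ^ k := by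
    rw [hT, Finset.mul_sum]
    exact Finset.sum_congr rfl fun u _ => by rw [Units.val_mul, map_mul, mul_pow]
  have h2 : f (c : ZMod n) ^ k * T = T := h2'.trans hre
  have h3 : (f (c : ZMod n) ^ k - 1) * T = 0 := by ring_nf; rw [mul_comm] at h2; linear_combination h2
  exact (hc.mul_right_eq_zero).mp h3

lemma aux_isUnit {p e : ℕ} [Fact p.Prime] (he : 0 < e) (z : ZMod (p ^ e))
    (hz : IsUnit (ZMod.castHom (dvd_pow_self p he.ne') (ZMod p) z)) : IsUnit z := by
  haveI : NeZero (p ^ e) := ⟨pow_ne_zero e (Fact.out : p.Prime).ne_zero⟩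
  have hzv : ((z.val : ℕ) : ZMod (p ^ e)) = z := ZMod.natCast_rightInverse z
  rw [← hzv, map_natCast, ZMod.isUnit_iff_coprime] at hz
  rw [← hzv, ZMod.isUnit_iff_coprime]
  exact (Nat.coprime_pow_right_iff he _ _).mpr hz

theorem coprime_powerSum_dvd (n k : ℕ) (hn : 0 < n) (hodd : Odd n) (hk : 0 < k)
    (h : ∀ p : ℕ, p.Prime → p ∣ n → ¬ (p - 1) ∣ k) :
    n ∣ ∑ j ∈ (Finset.Icc 1 n).filter (fun j => Nat.gcd j n = 1), j ^ k := by
  rcases eq_or_lt_of_le (show 1 ≤ n from hn) with h1 | h1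
  · rw [← h1]; exact one_dvd _
  haveI : NeZero n := ⟨hn.ne'⟩
  have hset : (Finset.Icc 1 n).filter (fun j => Nat.gcd j n = 1)
      = (Finset.range n).filter (fun j => Nat.gcd j n = 1) := by
    ext j
    simp only [Finset.mem_filter, Finset.mem_Icc, Finset.mem_range]
    constructor
    · rintro ⟨⟨hj1, hj2⟩, hg⟩
      refine ⟨lt_of_le_of_ne hj2 ?_, hg⟩
      rintro rfl
      rw [Nat.gcd_self] at hg; omega
    · rintro ⟨hj, hg⟩
      have : j ≠ 0 := by rintro rfl; rw [Nat.gcd_zero_left] at hg; omega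
      exact ⟨⟨by omega, hj.le⟩, hg⟩
  rw [hset]
  set S := ∑ j ∈ (Finset.range n).filter (fun j => Nat.gcd j n = 1), j ^ k with hS
  have hcast : ((S : ℕ) : ZMod n) = ∑ u : (ZMod n)ˣ, ((u : ZMod n)) ^ k := by
    rw [hS, Nat.cast_sum]
    push_cast
    refine Finset.sum_bij
      (fun j hj => (ZMod.unitOfCoprime j (Finset.mem_filter.mp hj).2 : (ZMod n)ˣ)) ?_ ?_ ?_ ?_
    · intro a ha; exact Finset.mem_univ _
    · intro a ha b hb hab
      have h2 : ((a : ℕ) : ZMod n) = ((b : ℕ) : ZMod n) := by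
        have := congrArg (fun u : (ZMod n)ˣ => (u : ZMod n)) hab
        simpa [ZMod.coe_unitOfCoprime] using this
      have ha' := Finset.mem_range.mp (Finset.mem_filter.mp ha).1
      have hb' := Finset.mem_range.mp (Finset.mem_filter.mp hb).1
      have := congrArg ZMod.val h2
      rwa [ZMod.val_cast_of_lt ha', ZMod.val_cast_of_lt hb'] at this
    · intro u _
      refine ⟨(u : ZMod n).val, Finset.mem_filter.mpr
        ⟨Finset.mem_range.mpr (ZMod.val_lt _), ZMod.val_coe_unit_coprime u⟩, ?_⟩
      exact Units.ext (by simp [ZMod.coe_unitOfCoprime, ZMod.natCast_rightInverse _])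
    · intro j hj; rw [ZMod.coe_unitOfCoprime]
  rw [Nat.dvd_iff_prime_pow_dvd_dvd]
  intro p e hp hpe
  rcases Nat.eq_zero_or_pos e with rfl | he
  · simpa using one_dvd _
  have hp' : p.Prime := hp
  haveI : Fact p.Prime := ⟨hp'⟩
  have hpn : p ∣ n := dvd_trans (dvd_pow_self p he.ne') hpe
  have hkp := h p hp' hpn
  obtain ⟨g, hg⟩ := IsCyclic.exists_generator (α := (ZMod p)ˣ)
  have horder : orderOf g = p - 1 := by
    rw [orderOf_eq_card_of_forall_mem_zpowers hg, Nat.card_eq_fintype_card, ZMod.card_units_eq_totient,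
      Nat.totient_prime hp']
  have hgk : g ^ k ≠ 1 := fun hgk1 => hkp (horder ▸ orderOf_dvd_of_pow_eq_one hgk1)
  obtain ⟨c, hc⟩ := ZMod.unitsMap_surjective hpn g
  have hMn : p ^ e ∣ n := hpe
  have hunit : IsUnit ((ZMod.castHom hMn (ZMod (p ^ e))) (c : ZMod n) ^ k - 1) := by
    apply aux_isUnit he
    rw [map_sub, map_pow, map_one]
    have hval : (ZMod.castHom (dvd_pow_self p he.ne') (ZMod p))
        ((ZMod.castHom hMn (ZMod (p ^ e))) (c : ZMod n)) = ((g : (ZMod p)ˣ) : ZMod p) := by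
      rw [← RingHom.comp_apply, ZMod.castHom_comp, ← hc]
      rfl
    rw [hval]
    have hne : ((g : ZMod p)) ^ k - 1 ≠ 0 := by
      intro h0
      apply hgk
      ext
      push_cast
      linear_combination h0
    exact isUnit_iff_ne_zero.mpr hne
  have hT0 := aux_sum_zero hMn c hunit
  have hz : ((S : ℕ) : ZMod (p ^ e)) = 0 := by
    have h4 := congrArg (ZMod.castHom hMn (ZMod (p ^ e))) hcast
    rw [map_natCast, map_sum] at h4
    simp only [map_pow] at h4
    rw [h4]
    exact hT0
  exact (ZMod.natCast_eq_zero_iff _ _).mp hz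
end

section
/- Let a be odd and b be even positive integers. Then for every positive integer n, n divides S_{an+b}(n) if and only if n is odd and for every prime p dividing n, p-1 does not divide an+b. -/
lemma S_cast (k n P : ℕ) : ((S k n : ℕ) : ZMod P) = ∑ j ∈ Finset.Ioc 0 n, (j : ZMod P) ^ k := by
  rw [S, ← Finset.Icc_add_one_left_eq_Ioc]
  push_cast
  rfl

/-- Odd case: n odd, k odd, then n ∣ S k n. -/
lemma odd_dvd {k n : ℕ} (hk : Odd k) (hn : Odd n) : n ∣ S k n := by
  rw [← ZMod.natCast_eq_zero_iff, S_cast]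
  have hsplit : Finset.Ioc 0 n = insert n (Finset.Ioo 0 n) :=
    (Finset.Ioo_insert_right hn.pos).symm
  rw [hsplit, Finset.sum_insert Finset.right_notMem_Ioo]
  have h1 : ((n : ZMod n)) ^ k = 0 := by
    rw [ZMod.natCast_self, zero_pow hk.pos.ne']
  rw [h1, zero_add]
  refine Finset.sum_involution (fun j _ => n - j) ?_ ?_ ?_ ?_
  · intro j hj
    simp only [Finset.mem_Ioo] at hj
    have hjn : j ≤ n := le_of_lt hj.2
    have : ((n - j : ℕ) : ZMod n) = -(j : ZMod n) := by
      rw [Nat.cast_sub hjn, ZMod.natCast_self, zero_sub]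
    rw [this, hk.neg_pow, add_neg_cancel]
  · intro j hj _
    simp only [Finset.mem_Ioo] at hj
    intro heq
    have heq' : n - j = j := heq
    exact (Nat.not_odd_iff_even.mpr ⟨j, by omega⟩) hn
  · intro j hj
    simp only [Finset.mem_Ioo] at hj ⊢
    omega
  · intro j hj
    simp only [Finset.mem_Ioo] at hj
    show n - (n - j) = j
    omega

/-- Periodicity: S k (m * P) ≡ m * S k P mod P. -/
lemma S_period (k P : ℕ) : ∀ m : ℕ,
    ((S k (m * P) : ℕ) : ZMod P) = (m : ZMod P) * ((S k P : ℕ) : ZMod P) := by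
  intro m
  induction m with
  | zero => simp [S]
  | succ m ih =>
    rw [S_cast] at ih ⊢
    have hle : m * P ≤ (m + 1) * P := by nlinarith
    rw [← Finset.sum_Ioc_consecutive (fun j => (j : ZMod P) ^ k) (Nat.zero_le (m * P)) hle, ih]
    have hmap : Finset.Ioc (m * P) ((m + 1) * P)
        = Finset.map (addLeftEmbedding (m * P)) (Finset.Ioc 0 P) := by
      rw [Finset.map_add_left_Ioc]
      congr 1 <;> ring
    rw [hmap, Finset.sum_map]
    have hcast : ∀ j : ℕ, ((addLeftEmbedding (m * P) j : ℕ) : ZMod P) ^ k = (j : ZMod P) ^ k := by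
      intro j
      have h : (addLeftEmbedding (m * P) j : ℕ) = m * P + j := rfl
      rw [h]
      push_cast
      rw [ZMod.natCast_self, mul_zero, zero_add]
    simp only [hcast]
    rw [S_cast]
    push_cast
    ring

/-- key 2-adic lemma -/
lemma S_two_pow {k : ℕ} (hk : Even k) (hk0 : 0 < k) :
    ∀ w : ℕ, 1 ≤ w → S k (2 ^ w) ≡ 2 ^ (w - 1) [MOD 2 ^ w] := by
  have hk2 : 2 ≤ k := by rcases hk with ⟨t, rfl⟩; omega
  intro w
  induction w with
  | zero => omega
  | succ w ih =>
    intro _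
    by_cases hw0 : w = 0
    · -- base case: S k 2 = 1 + 2^k ≡ 1 mod 2
      subst hw0
      show S k (2 ^ 1) ≡ 2 ^ 0 [MOD 2 ^ 1]
      have hS : S k (2 ^ 1) = 1 + 2 ^ k := by
        show (∑ j ∈ Finset.Icc 1 2, j ^ k) = 1 + 2 ^ k
        rw [show (2 : ℕ) = 1 + 1 from rfl, Finset.sum_Icc_succ_top (by norm_num)]
        norm_num
      rw [hS]
      refine ((Nat.modEq_iff_dvd' ?_).mpr ?_).symm
      · norm_num
      · simpa using hk0.ne'
    · have hw1 : 1 ≤ w := by omega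
      have IH := ih hw1
      set H : ℕ := 2 ^ w with hH
      set N : ℕ := 2 ^ (w + 1) with hN
      have hNH : N = 2 * H := by rw [hN, hH, pow_succ]; ring
      have hHpos : 0 < H := Nat.pow_pos (by norm_num)
      -- extract t from IH
      have hle : 2 ^ (w - 1) ≤ S k H := by
        have h1 : H ≤ S k H := by
          have : ∀ j ∈ Finset.Icc 1 H, 1 ≤ j ^ k := by
            intro j hj
            simp only [Finset.mem_Icc] at hj
            exact Nat.one_le_pow _ _ hj.1
          calc H = ∑ _j ∈ Finset.Icc 1 H, 1 := by simp
          _ ≤ ∑ j ∈ Finset.Icc 1 H, j ^ k := Finset.sum_le_sum this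
        calc 2 ^ (w - 1) ≤ 2 ^ w := Nat.pow_le_pow_right (by norm_num) (by omega)
        _ ≤ S k H := h1
      obtain ⟨t, ht⟩ := (Nat.modEq_iff_dvd' hle).mp IH.symm
      have htS : S k H = 2 ^ (w - 1) + H * t := by omega
      -- main computation in ZMod N
      have hx : (2 : ZMod N) ^ (w + 1) = 0 := by
        have := ZMod.natCast_self N
        rw [hN] at this
        push_cast at this
        exact this
      have hB : ∑ j ∈ Finset.Ioc H N, (j : ZMod N) ^ k
          = ∑ i ∈ Finset.Ico 0 H, (i : ZMod N) ^ k := by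
        refine Finset.sum_bij' (fun a _ => N - a) (fun b _ => N - b) ?_ ?_ ?_ ?_ ?_
        · intro a ha
          simp only [Finset.mem_Ioc] at ha
          simp only [Finset.mem_Ico]
          omega
        · intro b hb
          simp only [Finset.mem_Ico] at hb
          simp only [Finset.mem_Ioc]
          omega
        · intro a ha
          simp only [Finset.mem_Ioc] at ha
          show N - (N - a) = a
          omega
        · intro b hb
          simp only [Finset.mem_Ico] at hb
          show N - (N - b) = b
          omega
        · intro a ha
          simp only [Finset.mem_Ioc] at ha
          have : ((N - a : ℕ) : ZMod N) = -(a : ZMod N) := by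
            rw [Nat.cast_sub ha.2, ZMod.natCast_self, zero_sub]
          rw [this, hk.neg_pow]
      have hIco : ∑ i ∈ Finset.Ico 0 H, (i : ZMod N) ^ k
          = ∑ i ∈ Finset.Ioo 0 H, (i : ZMod N) ^ k := by
        rw [← Finset.Ioo_insert_left hHpos, Finset.sum_insert Finset.left_notMem_Ioo]
        simp [zero_pow hk0.ne']
      have hIoc : ∑ i ∈ Finset.Ioc 0 H, (i : ZMod N) ^ k
          = ∑ i ∈ Finset.Ioo 0 H, (i : ZMod N) ^ k + ((H : ℕ) : ZMod N) ^ k := by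
        rw [← Finset.Ioo_insert_right hHpos, Finset.sum_insert Finset.right_notMem_Ioo]
        ring
      have key : ((S k N : ℕ) : ZMod N)
          = 2 * ((S k H : ℕ) : ZMod N) - ((H : ℕ) : ZMod N) ^ k := by
        rw [← S_cast] at hIoc
        rw [S_cast, ← Finset.sum_Ioc_consecutive (fun j => (j : ZMod N) ^ k)
          (Nat.zero_le H) (by omega : H ≤ N), hB, hIco, ← S_cast]
        linear_combination -hIoc
      -- now finish
      have hgoal : ((S k N : ℕ) : ZMod N) = ((2 ^ w : ℕ) : ZMod N) := by
        rw [key, htS, hH]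
        push_cast
        have e1 : (2 : ZMod N) * (2 : ZMod N) ^ (w - 1) = (2 : ZMod N) ^ w := by
          rw [← pow_succ']
          congr 1
          omega
        have e2 : (2 : ZMod N) * ((2 : ZMod N) ^ w * (t : ZMod N)) = 0 := by
          rw [← mul_assoc, ← pow_succ', hx, zero_mul]
        have e3 : ((2 : ZMod N) ^ w) ^ k = 0 := by
          rw [← pow_mul]
          have hwk : w + 1 ≤ w * k := by
            calc w + 1 ≤ w + w := by omega
            _ = w * 2 := by ring
            _ ≤ w * k := Nat.mul_le_mul_left w hk2
          have hsplit' : w * k = (w + 1) + (w * k - (w + 1)) := by omega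
          rw [hsplit', pow_add, hx, zero_mul]
        rw [mul_add, e1, e2, e3]
        ring
      exact (ZMod.natCast_eq_natCast_iff _ _ _).mp hgoal

/-- Even case: n even, k even positive, then n does not divide S k n. -/
lemma even_not_dvd {k n : ℕ} (hk : Even k) (hk0 : 0 < k) (hn : Even n) (hn0 : 0 < n) :
    ¬ n ∣ S k n := by
  intro hdvd
  set v : ℕ := n.factorization 2 with hv
  set m : ℕ := n / 2 ^ v with hm
  have h2n : 2 ∣ n := hn.two_dvd
  have hv1 : 1 ≤ v := Nat.Prime.factorization_pos_of_dvd Nat.prime_two hn0.ne' h2n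
  have hvd : 2 ^ v ∣ n := Nat.ordProj_dvd n 2
  have hmn : 2 ^ v * m = n := Nat.ordProj_mul_ordCompl_eq_self n 2
  have hmodd : ¬ 2 ∣ m := Nat.not_dvd_ordCompl Nat.prime_two hn0.ne'
  have hdvd2 : 2 ^ v ∣ S k n := dvd_trans hvd hdvd
  have hz : ((S k n : ℕ) : ZMod (2 ^ v)) = 0 :=
    (ZMod.natCast_eq_zero_iff _ _).mpr hdvd2
  have hper : ((S k n : ℕ) : ZMod (2 ^ v))
      = (m : ZMod (2 ^ v)) * ((S k (2 ^ v) : ℕ) : ZMod (2 ^ v)) := by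
    have : n = m * 2 ^ v := by rw [← hmn, mul_comm]
    rw [this]
    exact S_period k (2 ^ v) m
  have hS2 : ((S k (2 ^ v) : ℕ) : ZMod (2 ^ v)) = ((2 ^ (v - 1) : ℕ) : ZMod (2 ^ v)) :=
    (ZMod.natCast_eq_natCast_iff _ _ _).mpr (S_two_pow hk hk0 v hv1)
  rw [hper, hS2] at hz
  have : ((m * 2 ^ (v - 1) : ℕ) : ZMod (2 ^ v)) = 0 := by rw [Nat.cast_mul]; exact hz
  have hdd : 2 ^ v ∣ m * 2 ^ (v - 1) := (ZMod.natCast_eq_zero_iff _ _).mp this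
  have hvv : (2 : ℕ) ^ v = 2 ^ (v - 1) * 2 := by
    rw [← pow_succ]
    congr 1
    omega
  rw [hvv, mul_comm m] at hdd
  have h2m : 2 ∣ m := (mul_dvd_mul_iff_left (a := (2:ℕ) ^ (v-1)) (by positivity)).mp hdd
  exact hmodd h2m

theorem affine_odd_even (a b : ℕ) (ha : 0 < a) (hb : 0 < b) (hao : Odd a) (hbe : Even b) :
    ∀ n : ℕ, 0 < n →
      (n ∣ S (a * n + b) n ↔
        Odd n ∧ ∀ p : ℕ, p.Prime → p ∣ n → ¬ (p - 1) ∣ (a * n + b)) := by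
  intro n hn
  rcases Nat.even_or_odd n with hne | hno
  · -- n even: both sides false
    have hke : Even (a * n + b) := (hne.mul_left a).add hbe
    have hk0 : 0 < a * n + b := by omega
    constructor
    · intro h
      exact absurd h (even_not_dvd hke hk0 hne hn)
    · rintro ⟨hodd, -⟩
      exact absurd hodd (Nat.not_odd_iff_even.mpr hne)
  · -- n odd: both sides true
    have hko : Odd (a * n + b) := (hao.mul hno).add_even hbe
    constructor
    · intro _
      refine ⟨hno, fun p hp hpn hdvd => ?_⟩
      have hp2 : p ≠ 2 := by
        rintro rfl
        exact (Nat.not_odd_iff_even.mpr (even_iff_two_dvd.mpr hpn)) hno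
      have hpo : Odd p := hp.odd_of_ne_two hp2
      have hpe : Even (p - 1) := Nat.Odd.sub_odd hpo odd_one
      have : Even (a * n + b) := even_iff_two_dvd.mpr (hpe.two_dvd.trans hdvd)
      exact (Nat.not_even_iff_odd.mpr hko) this
    · intro _
      exact odd_dvd hko hno
end

section
/- Let b be an odd integer and n a positive odd integer. Then n does not divide S_{n+b}(n) if and only if n can be written as n = kp^2 - kp - bp for some odd prime p and some integer k with k > b/(p-1). -/
open Finset

-- binomial helper
lemma aux_binom2 {R : Type*} [CommRing R] (a b : R) (m : ℕ) :
    ∃ c : R, (a + b) ^ (m + 1) = a ^ (m + 1) + (m + 1) * a ^ m * b + c * b ^ 2 := by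
  induction m with
  | zero => exact ⟨0, by ring⟩
  | succ m ih =>
    obtain ⟨c, hc⟩ := ih
    refine ⟨a * c + (m + 1) * a ^ m + c * b, ?_⟩
    calc (a + b) ^ (m + 2) = (a + b) * (a + b) ^ (m + 1) := by ring
    _ = (a + b) * (a ^ (m + 1) + (m + 1) * a ^ m * b + c * b ^ 2) := by rw [hc]
    _ = a ^ (m + 2) + (↑(m + 1) + 1) * a ^ (m + 1) * b + (a * c + (m + 1) * a ^ m + c * b) * b ^ 2 := by
        push_cast; ring
    _ = _ := by push_cast; ring

-- blocks
lemma aux_sum_blocks {M : Type*} [AddCommMonoid M] (f : ℕ → M) (c q : ℕ) :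
    ∑ j ∈ range (c * q), f j = ∑ i ∈ range c, ∑ r ∈ range q, f (q * i + r) := by
  induction c with
  | zero => simp
  | succ c ih =>
    rw [Nat.succ_mul, Finset.sum_range_add, ih, Finset.sum_range_succ]
    congr 1
    exact Finset.sum_congr rfl fun r _ => by rw [mul_comm q c]

-- sum over range N of g ∘ cast = sum over ZMod N
lemma aux_sum_range_zmod {M : Type*} [AddCommMonoid M] (N : ℕ) [NeZero N] (g : ZMod N → M) :
    ∑ j ∈ range N, g (j : ZMod N) = ∑ x : ZMod N, g x := by
  refine Finset.sum_nbij' (i := fun j => (j : ZMod N)) (j := fun x => x.val) ?_ ?_ ?_ ?_ ?_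
  · intro a _; exact Finset.mem_univ _
  · intro x _; exact Finset.mem_range.2 x.val_lt
  · intro a ha; exact ZMod.val_cast_of_lt (Finset.mem_range.1 ha)
  · intro x _; exact ZMod.natCast_rightInverse x
  · intro a _; rfl


lemma aux_field_sum_pow (p : ℕ) [hp : Fact p.Prime] (m : ℕ) (hm : m ≠ 0) :
    ∑ x : ZMod p, x ^ m = if (p - 1) ∣ m then -1 else 0 := by
  classical
  let φ : (ZMod p)ˣ ↪ ZMod p := ⟨fun x ↦ x, Units.val_injective⟩
  have huniv : univ.map φ = univ \ {0} := by
    ext x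
    simpa only [mem_map, mem_univ, Function.Embedding.coeFn_mk, true_and, mem_sdiff,
      mem_singleton, φ] using (show (∃ a : (ZMod p)ˣ, (a : ZMod p) = x) ↔ ¬x = 0 from isUnit_iff_ne_zero)
  have hq : Fintype.card (ZMod p) = p := ZMod.card p
  calc ∑ x : ZMod p, x ^ m = ∑ x ∈ univ \ {(0 : ZMod p)}, x ^ m := by
        rw [← sum_sdiff ({0} : Finset (ZMod p)).subset_univ, sum_singleton, zero_pow hm, add_zero]
    _ = ∑ x : (ZMod p)ˣ, ((x : ZMod p) ^ m) := by simp [φ, ← huniv, univ.sum_map φ]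
    _ = if (p - 1) ∣ m then -1 else 0 := by
        rw [FiniteField.sum_pow_units (ZMod p) m, hq]


lemma aux_step_lemma (p : ℕ) (hp : p.Prime) (hop : Odd p) (k m : ℕ) (hk : 1 ≤ k) (hm : m ≠ 0) :
    ((p : ℤ)) ^ (k + 1) ∣
      (∑ j ∈ range (p ^ (k + 1)), (j : ℤ) ^ m) - p * ∑ j ∈ range (p ^ k), (j : ℤ) ^ m := by
  obtain ⟨m', rfl⟩ : ∃ m', m = m' + 1 := ⟨m - 1, (Nat.succ_pred_eq_of_ne_zero hm).symm⟩
  set N := p ^ (k + 1) with hN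
  haveI : NeZero N := ⟨pow_ne_zero _ hp.pos.ne'⟩
  have key : (((∑ j ∈ range (p ^ (k + 1)), (j : ℤ) ^ (m' + 1))
      - p * ∑ j ∈ range (p ^ k), (j : ℤ) ^ (m' + 1) : ℤ) : ZMod N) = 0 := by
    push_cast
    rw [show p ^ (k + 1) = p * p ^ k from pow_succ' p k,
      aux_sum_blocks (fun j => ((j : ℕ) : ZMod N) ^ (m' + 1)) p (p ^ k)]
    have hpk2 : ((p : ZMod N)) ^ k * ((p : ZMod N)) ^ k = 0 := by
      rw [← pow_add, show ((p : ZMod N)) = ((p : ℕ) : ZMod N) by push_cast; rfl, ← Nat.cast_pow,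
        ZMod.natCast_eq_zero_iff]
      exact pow_dvd_pow p (by omega)
    have hE : (p : ZMod N) ^ k * (∑ i ∈ range p, (i : ZMod N)) = 0 := by
      have h2 : IsUnit (2 : ZMod N) := by
        rw [show (2 : ZMod N) = ((2 : ℕ) : ZMod N) by push_cast; rfl]
        exact (ZMod.isUnit_iff_coprime 2 N).2
          (Nat.Coprime.pow_right _ (hop.coprime_two_left))
      rw [← IsUnit.mul_left_eq_zero h2, mul_assoc]
      have e1 : (∑ i ∈ range p, (i : ZMod N)) * 2 = ((p * (p - 1) : ℕ) : ZMod N) := by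
        rw [← Finset.sum_range_id_mul_two p]
        push_cast
        ring
      rw [e1, show ((p : ZMod N)) ^ k = ((p ^ k : ℕ) : ZMod N) by push_cast; rfl,
        ← Nat.cast_mul, ZMod.natCast_eq_zero_iff]
      exact ⟨p - 1, by rw [hN]; ring⟩
    have hterm : ∀ i ∈ range p, ∀ r ∈ range (p ^ k),
        ((((p ^ k) * i + r : ℕ) : ZMod N)) ^ (m' + 1)
          = ((r : ZMod N)) ^ (m' + 1)
            + (((m' : ZMod N) + 1) * ((r : ZMod N)) ^ m') * ((p : ZMod N) ^ k * (i : ZMod N)) := by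
      intro i _ r _
      obtain ⟨c, hc⟩ := aux_binom2 ((r : ℕ) : ZMod N) ((p : ZMod N) ^ k * (i : ZMod N)) m'
      have hb2 : ((p : ZMod N) ^ k * (i : ZMod N)) ^ 2 = 0 := by
        rw [mul_pow, pow_two, hpk2, zero_mul]
      push_cast
      rw [add_comm ((p : ZMod N) ^ k * (i : ZMod N)) ((r : ℕ) : ZMod N), hc, hb2, mul_zero,
        add_zero]
    rw [Finset.sum_congr rfl (fun i hi => Finset.sum_congr rfl (fun r hr => hterm i hi r hr))]
    have hinner : ∀ i ∈ range p,
        ∑ r ∈ range (p ^ k), (((r : ZMod N)) ^ (m' + 1)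
          + (((m' : ZMod N) + 1) * ((r : ZMod N)) ^ m') * ((p : ZMod N) ^ k * (i : ZMod N)))
        = (∑ r ∈ range (p ^ k), ((r : ZMod N)) ^ (m' + 1))
          + (∑ r ∈ range (p ^ k), ((m' : ZMod N) + 1) * ((r : ZMod N)) ^ m')
            * ((p : ZMod N) ^ k * (i : ZMod N)) := by
      intro i _
      rw [Finset.sum_add_distrib, ← Finset.sum_mul]
    rw [Finset.sum_congr rfl hinner, Finset.sum_add_distrib, Finset.sum_const, card_range,
      ← Finset.mul_sum]
    have : (∑ i ∈ range p, ((p : ZMod N) ^ k * (i : ZMod N))) = 0 := by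
      rw [← Finset.mul_sum, hE]
    rw [this, mul_zero, add_zero, nsmul_eq_mul]
    push_cast
    ring
  have hcast : ((N : ℕ) : ℤ) = (p : ℤ) ^ (k + 1) := by push_cast [hN]; ring
  rw [← hcast, ← ZMod.intCast_zmod_eq_zero_iff_dvd]
  exact key


lemma aux_base_bridge (p : ℕ) (hp : p.Prime) (m : ℕ) (hm : m ≠ 0) :
    (((∑ j ∈ range p, (j : ℤ) ^ m : ℤ)) : ZMod p) = if (p - 1) ∣ m then -1 else 0 := by
  haveI : Fact p.Prime := ⟨hp⟩
  rw [← aux_field_sum_pow p m hm, ← aux_sum_range_zmod p (fun x : ZMod p => x ^ m)]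
  push_cast
  rfl

lemma aux_Ck (p : ℕ) (hp : p.Prime) (hop : Odd p) (m : ℕ) (hm : m ≠ 0) (hdvd : (p - 1) ∣ m) :
    ∀ k, 1 ≤ k → (p : ℤ) ^ k ∣ (∑ j ∈ range (p ^ k), (j : ℤ) ^ m) + (p : ℤ) ^ (k - 1) := by
  intro k hk
  induction k, hk using Nat.le_induction with
  | base =>
    have h := aux_base_bridge p hp m hm
    rw [if_pos hdvd] at h
    have : (((∑ j ∈ range p, (j : ℤ) ^ m + 1 : ℤ)) : ZMod p) = 0 := by
      push_cast [h]; ring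
    rw [ZMod.intCast_zmod_eq_zero_iff_dvd] at this
    simpa using this
  | succ k hk ih =>
    have h1 := aux_step_lemma p hp hop k m hk hm
    have h2 : (p : ℤ) ^ (k + 1) ∣ (p : ℤ) * ((∑ j ∈ range (p ^ k), (j : ℤ) ^ m) + (p : ℤ) ^ (k - 1)) := by
      rw [pow_succ']
      exact mul_dvd_mul_left _ ih
    have := dvd_add h1 h2
    convert this using 1
    · rfl
    have hkk : (p : ℤ) ^ (k + 1 - 1) = (p : ℤ) * (p : ℤ) ^ (k - 1) := by
      rw [← pow_succ']
      congr 1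
      omega
    rw [hkk]
    ring

lemma aux_Zk (p : ℕ) (hp : p.Prime) (hop : Odd p) (m : ℕ) (hndvd : ¬ (p - 1) ∣ m) :
    ∀ k, (p : ℤ) ^ k ∣ ∑ j ∈ range (p ^ k), (j : ℤ) ^ m := by
  have hm : m ≠ 0 := fun h => hndvd (h ▸ dvd_zero _)
  intro k
  induction k with
  | zero => simpa using ⟨∑ j ∈ range (p ^ 0), (j : ℤ) ^ m, by simp⟩
  | succ k ih =>
    rcases Nat.eq_zero_or_pos k with rfl | hk
    · have h := aux_base_bridge p hp m hm
      rw [if_neg hndvd] at h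
      rw [ZMod.intCast_zmod_eq_zero_iff_dvd] at h
      simpa using h
    · have h1 := aux_step_lemma p hp hop k m hk hm
      have h2 : (p : ℤ) ^ (k + 1) ∣ (p : ℤ) * ∑ j ∈ range (p ^ k), (j : ℤ) ^ m := by
        rw [pow_succ']
        exact mul_dvd_mul_left _ ih
      simpa using dvd_add h1 h2


lemma aux_total' (N n m : ℕ) [NeZero N] (hd : N ∣ n) (hm : m ≠ 0) :
    (N : ℤ) ∣ (∑ j ∈ Icc 1 n, (j : ℤ) ^ m) - (n / N : ℕ) * ∑ j ∈ range N, (j : ℤ) ^ m := by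
  obtain ⟨c, rfl⟩ := hd
  rw [← ZMod.intCast_zmod_eq_zero_iff_dvd]
  have e1 : ∑ j ∈ Icc 1 (N * c), (j : ℤ) ^ m = ∑ j ∈ range (N * c + 1), (j : ℤ) ^ m := by
    have h0 : range (N * c + 1) = insert 0 (Icc 1 (N * c)) := by
      ext j; simp [Finset.mem_range, Finset.mem_insert]; omega
    rw [h0, Finset.sum_insert (by simp), Nat.cast_zero, zero_pow hm, zero_add]
  rw [e1, Finset.sum_range_succ, Nat.mul_div_cancel_left c (Nat.pos_of_ne_zero (NeZero.ne N))]
  push_cast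
  rw [mul_comm N c, aux_sum_blocks (fun j => ((j : ℕ) : ZMod N) ^ m) c N]
  have hb : ∀ i ∈ range c, ∑ r ∈ range N, (((N * i + r : ℕ) : ZMod N)) ^ m
      = ∑ r ∈ range N, ((r : ZMod N)) ^ m := by
    intro i _
    refine Finset.sum_congr rfl fun r _ => ?_
    push_cast
    rw [ZMod.natCast_self, zero_mul, zero_add]
  rw [Finset.sum_congr rfl hb, Finset.sum_const, card_range, nsmul_eq_mul]
  have hNc : (((N : ℕ) : ZMod N) * ((c : ℕ) : ZMod N)) ^ m = 0 := by
    rw [ZMod.natCast_self, zero_mul, zero_pow hm]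
  push_cast at hNc ⊢
  rw [hNc]
  ring


theorem aux_criterion (n m : ℕ) (hn : 0 < n) (hodd : Odd n) (hm : m ≠ 0) :
    ((n : ℤ) ∣ ∑ j ∈ Icc 1 n, (j : ℤ) ^ m) ↔
      ∀ p : ℕ, p.Prime → p ∣ n → ¬ ((p - 1) ∣ m) := by
  have hoddp : ∀ p : ℕ, p.Prime → p ∣ n → Odd p := by
    intro p pp hpn
    rcases pp.eq_two_or_odd' with rfl | h
    · exact absurd hodd (by rw [Nat.odd_iff]; omega)
    · exact h
  constructor
  · intro hdvd p pp hpn hpm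
    have hop := hoddp p pp hpn
    set k := n.factorization p with hk
    have hk1 : 1 ≤ k := (Nat.Prime.factorization_pos_of_dvd pp hn.ne' hpn)
    have hNd : p ^ k ∣ n := Nat.ordProj_dvd n p
    haveI : NeZero (p ^ k) := ⟨pow_ne_zero _ pp.pos.ne'⟩
    have h1 := aux_total' (p ^ k) n m hNd hm
    rw [Nat.cast_pow] at h1
    have h2 := aux_Ck p pp hop m hm hpm k hk1
    have h3 : ((p : ℤ)) ^ k ∣ ∑ j ∈ Icc 1 n, (j : ℤ) ^ m := by
      refine dvd_trans ?_ hdvd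
      exact_mod_cast Int.natCast_dvd_natCast.2 hNd
    have hcT : (p : ℤ) ^ k ∣ ((n / p ^ k : ℕ) : ℤ) * ∑ j ∈ range (p ^ k), (j : ℤ) ^ m := by
      have := dvd_sub h3 h1
      simpa using this
    have h4 : (p : ℤ) ^ k ∣ (p : ℤ) ^ (k - 1) * ((n / p ^ k : ℕ) : ℤ) := by
      have := dvd_sub (h2.mul_left ((n / p ^ k : ℕ) : ℤ)) hcT
      convert this using 1
      · rfl
      ring
    have hk' : (p : ℤ) ^ k = (p : ℤ) ^ (k - 1) * p := by
      rw [← pow_succ]; congr 1; omega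
    rw [hk'] at h4
    have h5 : (p : ℤ) ∣ ((n / p ^ k : ℕ) : ℤ) :=
      (mul_dvd_mul_iff_left (pow_ne_zero (k - 1)
        (show (p : ℤ) ≠ 0 by exact_mod_cast pp.pos.ne'))).1 h4
    rw [Int.natCast_dvd_natCast] at h5
    exact Nat.not_dvd_ordCompl pp hn.ne' h5
  · intro H
    have key : (n : ℤ) ∣ ((∑ j ∈ Icc 1 n, (j : ℤ) ^ m).natAbs : ℤ) := by
      rw [Int.natCast_dvd_natCast, Nat.dvd_iff_prime_pow_dvd_dvd]
      intro p k pp hpk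
      rcases Nat.eq_zero_or_pos k with rfl | hk
      · simp
      have pp' : p.Prime := pp
      have hpn : p ∣ n := (dvd_pow_self p hk.ne').trans hpk
      have hop := hoddp p pp' hpn
      have hndvd := H p pp' hpn
      haveI : NeZero (p ^ k) := ⟨pow_ne_zero _ pp'.pos.ne'⟩
      have h1 := aux_total' (p ^ k) n m hpk hm
      rw [Nat.cast_pow] at h1
      have h2 := aux_Zk p pp' hop m hndvd k
      have hS : ((p : ℤ)) ^ k ∣ ∑ j ∈ Icc 1 n, (j : ℤ) ^ m := by
        have := dvd_add h1 (h2.mul_left ((n / p ^ k : ℕ) : ℤ))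
        simpa using this
      rw [← Int.natCast_dvd_natCast, Int.dvd_natAbs]
      exact_mod_cast hS
    rwa [Int.dvd_natAbs] at key


theorem affine_one_b_characterization (b : ℤ) (hb : Odd b) (n : ℕ) (hn : 0 < n)
    (hodd : Odd n) (hpos : 0 < (n : ℤ) + b) :
    ¬ (n : ℤ) ∣ ∑ j ∈ Finset.Icc 1 n, (j : ℤ) ^ ((n : ℤ) + b).toNat ↔
      ∃ (p : ℕ) (k : ℤ), p.Prime ∧ Odd p ∧ b < k * ((p : ℤ) - 1) ∧
        (n : ℤ) = k * (p : ℤ) ^ 2 - k * (p : ℤ) - b * (p : ℤ) := by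
  set m := ((n : ℤ) + b).toNat with hm
  have hmz : (m : ℤ) = (n : ℤ) + b := Int.toNat_of_nonneg hpos.le
  have hm0 : m ≠ 0 := by
    intro h
    rw [h] at hmz
    simp at hmz
    omega
  rw [aux_criterion n m hn hodd hm0]
  push_neg
  constructor
  · rintro ⟨p, pp, hpn, hpm⟩
    have hop : Odd p := by
      rcases pp.eq_two_or_odd' with rfl | h
      · exact absurd hodd (by rw [Nat.odd_iff]; omega)
      · exact h
    obtain ⟨d, hd⟩ := hpn
    have hd1 : 1 ≤ d := by
      rcases Nat.eq_zero_or_pos d with rfl | h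
      · omega
      · exact h
    have hcast : ((p - 1 : ℕ) : ℤ) = (p : ℤ) - 1 := by
      have := pp.one_le
      push_cast [Nat.cast_sub this]
      ring
    have hdvdZ : ((p : ℤ) - 1) ∣ ((d : ℤ) + b) := by
      have h1 : ((p : ℤ) - 1) ∣ (m : ℤ) := by
        rw [← hcast]
        exact_mod_cast Int.natCast_dvd_natCast.2 hpm
      have h2 : (m : ℤ) = ((p : ℤ) - 1) * d + ((d : ℤ) + b) := by
        rw [hmz, hd]
        push_cast
        ring
      have := dvd_sub h1 (Dvd.dvd.mul_right dvd_rfl (d : ℤ))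
      rw [h2] at h1
      exact (dvd_add_right (Dvd.dvd.mul_right dvd_rfl (d : ℤ))).1 h1
    obtain ⟨k, hk⟩ := hdvdZ
    refine ⟨p, k, pp, hop, ?_, ?_⟩
    · have : (d : ℤ) + b = k * ((p : ℤ) - 1) := by rw [hk]; ring
      have hd1' : (1 : ℤ) ≤ (d : ℤ) := by exact_mod_cast hd1
      linarith
    · have : (n : ℤ) = (p : ℤ) * d := by exact_mod_cast congrArg (Nat.cast : ℕ → ℤ) hd
      rw [this]
      have hdk : (d : ℤ) = k * ((p : ℤ) - 1) - b := by
        rw [eq_sub_iff_add_eq, hk]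
        ring
      rw [hdk]
      ring
  · rintro ⟨p, k, pp, hop, hbk, hnk⟩
    have hcast : ((p - 1 : ℕ) : ℤ) = (p : ℤ) - 1 := by
      have := pp.one_le
      push_cast [Nat.cast_sub this]
      ring
    refine ⟨p, pp, ?_, ?_⟩
    · have : (p : ℤ) ∣ (n : ℤ) := ⟨k * p - k - b, by rw [hnk]; ring⟩
      exact_mod_cast this
    · have : ((p - 1 : ℕ) : ℤ) ∣ (m : ℤ) := by
        rw [hcast, hmz, hnk]
        exact ⟨k * p - b, by ring⟩
      exact_mod_cast this
end

section
/- Let P be a finite set of odd primes and m the product of the primes in P. Then there exists a positive integer n with n \equiv 0 (mod p) and n \equiv -b (mod p-1) for every p in P if and only if gcd(m, \varphi(m)) divides b. -/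
private lemma sqf_dvd_int {d : ℕ} (hd : Squarefree d) {k : ℤ}
    (h : ∀ q : ℕ, q.Prime → q ∣ d → (q : ℤ) ∣ k) : (d : ℤ) ∣ k := by
  have hprod := Nat.prod_primeFactors_of_squarefree hd
  have : ((∏ q ∈ d.primeFactors, q : ℕ) : ℤ) ∣ k := by
    push_cast
    apply Finset.prod_dvd_of_coprime
    · intro p hp q hq hne
      exact Nat.isCoprime_iff_coprime.mpr
        ((Nat.coprime_primes (Nat.prime_of_mem_primeFactors hp)
          (Nat.prime_of_mem_primeFactors hq)).mpr hne)
    · intro q hq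
      exact h q (Nat.prime_of_mem_primeFactors hq) (Nat.dvd_of_mem_primeFactors hq)
  rwa [hprod] at this

private lemma prod_facts (P : Finset ℕ) (hP : ∀ p ∈ P, p.Prime) :
    Squarefree (∏ p ∈ P, p) ∧ Nat.totient (∏ p ∈ P, p) = ∏ p ∈ P, (p - 1) := by
  classical
  induction P using Finset.induction with
  | empty => simp [squarefree_one]
  | @insert a s ha ih =>
    have hPs : ∀ p ∈ s, p.Prime := fun p hp => hP p (Finset.mem_insert_of_mem hp)
    have hap : a.Prime := hP a (Finset.mem_insert_self a s)
    obtain ⟨ih1, ih2⟩ := ih hPs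
    have hcop : Nat.Coprime a (∏ p ∈ s, p) := by
      apply Nat.Coprime.prod_right
      intro p hp
      exact (Nat.coprime_primes hap (hPs p hp)).mpr (by rintro rfl; exact ha hp)
    rw [Finset.prod_insert ha, Finset.prod_insert ha]
    constructor
    · exact (Nat.squarefree_mul hcop).mpr ⟨hap.squarefree, ih1⟩
    · rw [Nat.totient_mul hcop, ih2, Nat.totient_prime hap]

theorem crt_criterion (P : Finset ℕ) (hP : ∀ p ∈ P, p.Prime ∧ Odd p) (b : ℤ) :
    (∃ n : ℕ, 0 < n ∧ ∀ p ∈ P, (p : ℤ) ∣ (n : ℤ) ∧ ((p : ℤ) - 1) ∣ ((n : ℤ) + b)) ↔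
      (Nat.gcd (∏ p ∈ P, p) (Nat.totient (∏ p ∈ P, p)) : ℤ) ∣ b := by
  classical
  have hm : ∀ p ∈ P, p.Prime := fun p hp => (hP p hp).1
  set m := ∏ p ∈ P, p with hm_def
  obtain ⟨hsq, htot⟩ := prod_facts P hm
  have hmpos : 0 < m := Finset.prod_pos fun p hp => (hm p hp).pos
  set d := Nat.gcd m m.totient with hd_def
  constructor
  · rintro ⟨n, hn, h⟩
    have hdm : d ∣ m := Nat.gcd_dvd_left _ _
    have hdsq : Squarefree d := hsq.squarefree_of_dvd hdm
    -- m ∣ n over ℤ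
    have hmn : (m : ℤ) ∣ (n : ℤ) := by
      have : (∏ p ∈ P, (p : ℤ)) ∣ (n : ℤ) := by
        apply Finset.prod_dvd_of_coprime
        · intro p hp q hq hne
          exact Nat.isCoprime_iff_coprime.mpr
            ((Nat.coprime_primes (hm p hp) (hm q hq)).mpr hne)
        · intro p hp
          exact (h p hp).1
      rwa [← Nat.cast_prod] at this
    have hdn : (d : ℤ) ∣ (n : ℤ) :=
      dvd_trans (Int.natCast_dvd_natCast.mpr hdm) hmn
    -- d ∣ n + b
    have hdnb : (d : ℤ) ∣ (n : ℤ) + b := by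
      apply sqf_dvd_int hdsq
      intro q hq hqd
      have hqφ : q ∣ m.totient := dvd_trans hqd (Nat.gcd_dvd_right _ _)
      rw [htot] at hqφ
      obtain ⟨p, hp, hqp⟩ := (hq.prime.dvd_finset_prod_iff _).mp hqφ
      have h1p : 1 ≤ p := (hm p hp).one_lt.le
      have : (q : ℤ) ∣ (p : ℤ) - 1 := by
        have := Int.natCast_dvd_natCast.mpr hqp
        rwa [Nat.cast_sub h1p, Nat.cast_one] at this
      exact dvd_trans this (h p hp).2
    have : (d : ℤ) ∣ b := by
      have := dvd_sub hdnb hdn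
      simpa using this
    exact this
  · intro hdb
    set L := P.lcm (fun p => p - 1) with hL_def
    have hLφ : L ∣ m.totient := by
      apply Finset.lcm_dvd
      intro p hp
      rw [← Nat.totient_prime (hm p hp)]
      exact Nat.totient_dvd_of_dvd (Finset.dvd_prod_of_mem _ hp)
    have hgd : Nat.gcd m L ∣ d :=
      Nat.dvd_gcd (Nat.gcd_dvd_left _ _) (dvd_trans (Nat.gcd_dvd_right m L) hLφ)
    have hgb : (Nat.gcd m L : ℤ) ∣ b := dvd_trans (Int.natCast_dvd_natCast.mpr hgd) hdb
    obtain ⟨c, hc⟩ := hgb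
    set A := Nat.gcdA m L with hA_def
    set B := Nat.gcdB m L with hB_def
    have hbez : (Nat.gcd m L : ℤ) = m * A + L * B := Nat.gcd_eq_gcd_ab m L
    set x : ℤ := -(m * A * c) with hx_def
    have hmx : (m : ℤ) ∣ x := ⟨-(A * c), by ring⟩
    have hLxb : (L : ℤ) ∣ x + b := ⟨B * c, by rw [hc, hbez]; ring⟩
    have hLpos : 0 < L := by
      rcases Nat.eq_zero_or_pos L with h0 | h
      · exfalso
        rw [h0] at hLφ
        exact (Nat.totient_pos.mpr hmpos).ne' (Nat.eq_zero_of_zero_dvd hLφ)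
      · exact h
    have hmL1 : (1 : ℤ) ≤ (m : ℤ) * L := by
      have : (1 : ℕ) ≤ m * L := Nat.one_le_iff_ne_zero.mpr
        (Nat.mul_ne_zero hmpos.ne' hLpos.ne')
      exact_mod_cast this
    set k : ℤ := |x| + 1 with hk_def
    set n' : ℤ := x + k * (m * L) with hn'_def
    have hkpos : 0 < k := by positivity
    have hn'pos : 0 < n' := by
      have h1 : k * 1 ≤ k * ((m : ℤ) * L) := mul_le_mul_of_nonneg_left hmL1 hkpos.le
      have h2 : -x ≤ |x| := neg_le_abs x
      simp only [hn'_def, hk_def]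
      nlinarith
    refine ⟨n'.toNat, by omega, ?_⟩
    have hcast : ((n'.toNat : ℤ)) = n' := Int.toNat_of_nonneg hn'pos.le
    intro p hp
    have hpm : (p : ℤ) ∣ (m : ℤ) := Int.natCast_dvd_natCast.mpr (Finset.dvd_prod_of_mem _ hp)
    have h1p : 1 ≤ p := (hm p hp).one_lt.le
    have hpL : ((p : ℤ) - 1) ∣ (L : ℤ) := by
      have := Int.natCast_dvd_natCast.mpr (Finset.dvd_lcm hp : p - 1 ∣ L)
      rwa [Nat.cast_sub h1p, Nat.cast_one] at this
    constructor
    · rw [hcast]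
      exact dvd_add (dvd_trans hpm hmx) (Dvd.dvd.mul_left (dvd_trans hpm ⟨L, rfl⟩) k)
    · rw [hcast]
      have : n' + b = (x + b) + k * (m * L) := by ring
      rw [this]
      exact dvd_add (dvd_trans hpL hLxb)
        (Dvd.dvd.mul_left (dvd_trans hpL ⟨m, by ring⟩) k)
end
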